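/- arXiv:1710.02808 — 10 statements merged into one kernel-verified Lean document; each statement's English description precedes it below -/
import Mathlib

section
/- Consider the single-sensor least-squares registration problem. For a fixed azimuth bias Δφ ∈ ℝ, define for k = 1,…,K−1: c_k(Δφ) = λ⁻¹(cos(φ_{k+1}+Δφ) − cos(φ_k+Δφ)), s_k(Δφ) = λ⁻¹(sin(φ_{k+1}+Δφ) − sin(φ_k+Δφ)), y_k^c(Δφ) = −λ⁻¹(ρ_{k+1}·cos(φ_{k+1}+Δφ) − ρ_k·cos(φ_k+Δφ)), y_k^s(Δφ) = −λ⁻¹(ρ_{k+1}·sin(φ_{k+1}+Δφ) − ρ_k·sin(φ_k+Δφ)). Let H₀(Δφ) ∈ ℝ^{2(K−1)} be the vector (c₁, s₁, c₂, s₂, …, c_{K−1}, s_{K−1}), let H₁ ∈ ℝ^{2(K−1)×2} be the matrix whose (2k−1)-th row is (−T_k, 0) and whose 2k-th row is (0, −T_k), let y(Δφ) ∈ ℝ^{2(K−1)} be the vector (y₁^c, y₁^s, …, y_{K−1}^c, y_{K−1}^s), and let H(Δφ) = [H₀(Δφ), H₁] ∈ ℝ^{2(K−1)×3}. Assume that H(Δφ)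 has rank 3 for every Δφ ∈ ℝ. Then for all Δφ, Δφ' ∈ ℝ: (i) the first component of (H(Δφ)ᵀH(Δφ))⁻¹H(Δφ)ᵀy(Δφ) equals the first component of (H(Δφ')ᵀH(Δφ'))⁻¹H(Δφ')ᵀy(Δφ') (the optimal range bias is independent of Δφ), and (ii) ‖H(Δφ)·(H(Δφ)ᵀH(Δφ))⁻¹H(Δφ)ᵀy(Δφ) − y(Δφ)‖ = ‖H(Δφ')·(H(Δφ')ᵀH(Δφ'))⁻¹H(Δφ')ᵀy(Δφ') − y(Δφ')‖ (the optimal least-squares objective value is independent of Δφ). -/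
open Matrix

/-- The index `k` (first of a consecutive pair) as an element of `Fin K`. -/
def loIdx {K : ℕ} (k : Fin (K - 1)) : Fin K := ⟨k.1, by have h := k.2; omega⟩

/-- The index `k+1` (second of a consecutive pair) as an element of `Fin K`. -/
def hiIdx {K : ℕ} (k : Fin (K - 1)) : Fin K := ⟨k.1 + 1, by have h := k.2; omega⟩

/-- `c_k(Δφ) = λ⁻¹ (cos(φ_{k+1}+Δφ) − cos(φ_k+Δφ))`. -/
noncomputable def ck {K : ℕ} (φ : Fin K → ℝ) (lam : ℝ) (Δφ : ℝ) (k : Fin (K - 1)) : ℝ :=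
  lam⁻¹ * (Real.cos (φ (hiIdx k) + Δφ) - Real.cos (φ (loIdx k) + Δφ))

/-- `s_k(Δφ) = λ⁻¹ (sin(φ_{k+1}+Δφ) − sin(φ_k+Δφ))`. -/
noncomputable def sk {K : ℕ} (φ : Fin K → ℝ) (lam : ℝ) (Δφ : ℝ) (k : Fin (K - 1)) : ℝ :=
  lam⁻¹ * (Real.sin (φ (hiIdx k) + Δφ) - Real.sin (φ (loIdx k) + Δφ))

/-- `y_k^c(Δφ) = −λ⁻¹ (ρ_{k+1} cos(φ_{k+1}+Δφ) − ρ_k cos(φ_k+Δφ))`. -/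
noncomputable def yck {K : ℕ} (ρ φ : Fin K → ℝ) (lam : ℝ) (Δφ : ℝ) (k : Fin (K - 1)) : ℝ :=
  -(lam⁻¹ * (ρ (hiIdx k) * Real.cos (φ (hiIdx k) + Δφ) - ρ (loIdx k) * Real.cos (φ (loIdx k) + Δφ)))

/-- `y_k^s(Δφ) = −λ⁻¹ (ρ_{k+1} sin(φ_{k+1}+Δφ) − ρ_k sin(φ_k+Δφ))`. -/
noncomputable def ysk {K : ℕ} (ρ φ : Fin K → ℝ) (lam : ℝ) (Δφ : ℝ) (k : Fin (K - 1)) : ℝ :=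
  -(lam⁻¹ * (ρ (hiIdx k) * Real.sin (φ (hiIdx k) + Δφ) - ρ (loIdx k) * Real.sin (φ (loIdx k) + Δφ)))

/-- The matrix `H(Δφ) = [H₀(Δφ), H₁] ∈ ℝ^{2(K−1)×3}`; rows are indexed by pairs `(k, i)` with
`i = 0` for the “cosine” row `(c_k, −T_k, 0)` and `i = 1` for the “sine” row `(s_k, 0, −T_k)`. -/
noncomputable def Hmat {K : ℕ} (φ : Fin K → ℝ) (T : Fin (K - 1) → ℝ) (lam : ℝ) (Δφ : ℝ) :
    Matrix (Fin (K - 1) × Fin 2) (Fin 3) ℝ :=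
  Matrix.of fun p j =>
    if p.2 = 0 then
      if j = 0 then ck φ lam Δφ p.1 else if j = 1 then -T p.1 else 0
    else
      if j = 0 then sk φ lam Δφ p.1 else if j = 2 then -T p.1 else 0

/-- The vector `y(Δφ) = (y₁^c, y₁^s, …, y_{K−1}^c, y_{K−1}^s) ∈ ℝ^{2(K−1)}`. -/
noncomputable def yvec {K : ℕ} (ρ φ : Fin K → ℝ) (lam : ℝ) (Δφ : ℝ) :
    Fin (K - 1) × Fin 2 → ℝ :=
  fun p => if p.2 = 0 then yck ρ φ lam Δφ p.1 else ysk ρ φ lam Δφ p.1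

/-!
Shifting the azimuth bias by `δ` rotates each consecutive-pair block of the data by the planar
rotation `R(δ)`: `y(Δφ + δ) = Q y(Δφ)` and `H(Δφ + δ) = Q H(Δφ) Sᵀ` with `Q = I ⊗ R(δ)` and
`S = diag(1, R(δ))`, both orthogonal. An orthogonal change of the observations does not change a
least-squares problem, and the change of unknowns `S` only rotates the velocity part of the
solution, so the range-bias component and the residual norm are the same for every `Δφ`.
-/

open scoped Kronecker

namespace LeastSquares

variable {m n R : Type*} [Fintype m] [Fintype n] [DecidableEq n] [CommRing R]

noncomputable def solution (A : Matrix m n R) (y : m → R) : n → R :=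
  (Aᵀ * A)⁻¹ *ᵥ (Aᵀ *ᵥ y)

noncomputable def residual (A : Matrix m n R) (y : m → R) : m → R :=
  A *ᵥ solution A y - y

theorem solution_orthogonal_mul [DecidableEq m] {Q : Matrix m m R} (hQ : Qᵀ * Q = 1)
    (A : Matrix m n R) (y : m → R) : solution (Q * A) (Q *ᵥ y) = solution A y := by
  have hnormal : (Q * A)ᵀ * (Q * A) = Aᵀ * A := by
    rw [transpose_mul, Matrix.mul_assoc, ← Matrix.mul_assoc Qᵀ, hQ, Matrix.one_mul]
  have hrhs : (Q * A)ᵀ *ᵥ (Q *ᵥ y) = Aᵀ *ᵥ y := by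
    rw [mulVec_mulVec, transpose_mul, Matrix.mul_assoc, hQ, Matrix.mul_one]
  rw [solution, hnormal, hrhs, solution]

theorem solution_mul_of_mul_eq_one {S S' : Matrix n n R} (h : S * S' = 1) (A : Matrix m n R)
    (y : m → R) : solution (A * S) y = S' *ᵥ solution A y := by
  have h' : S' * S = 1 := mul_eq_one_comm.mp h
  have hinv : S⁻¹ = S' := inv_eq_right_inv h
  have hinvT : (Sᵀ)⁻¹ = S'ᵀ := inv_eq_right_inv (by rw [← transpose_mul, h', transpose_one])
  have hcancel : S'ᵀ * Sᵀ = 1 := by rw [← transpose_mul, h, transpose_one]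
  have hnormal : (A * S)ᵀ * (A * S) = Sᵀ * (Aᵀ * A) * S := by
    simp only [transpose_mul, Matrix.mul_assoc]
  rw [solution, hnormal, Matrix.mul_inv_rev, Matrix.mul_inv_rev, hinv, hinvT, transpose_mul,
    solution]
  simp only [mulVec_mulVec, Matrix.mul_assoc]
  rw [← Matrix.mul_assoc S'ᵀ, hcancel, Matrix.one_mul]

theorem residual_orthogonal_mul [DecidableEq m] {Q : Matrix m m R} (hQ : Qᵀ * Q = 1)
    (A : Matrix m n R) (y : m → R) : residual (Q * A) (Q *ᵥ y) = Q *ᵥ residual A y := by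
  rw [residual, residual, solution_orthogonal_mul hQ, mulVec_sub, mulVec_mulVec]

theorem residual_mul_of_mul_eq_one {S S' : Matrix n n R} (h : S * S' = 1) (A : Matrix m n R)
    (y : m → R) : residual (A * S) y = residual A y := by
  rw [residual, residual, solution_mul_of_mul_eq_one h, mulVec_mulVec, Matrix.mul_assoc, h,
    Matrix.mul_one]

end LeastSquares

theorem Matrix.sum_sq_mulVec_of_transpose_mul_self {m R : Type*} [Fintype m] [DecidableEq m]
    [CommRing R] {Q : Matrix m m R} (hQ : Qᵀ * Q = 1) (v : m → R) :
    ∑ i, (Q *ᵥ v) i ^ 2 = ∑ i, v i ^ 2 := by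
  simp only [sq]
  change (Q *ᵥ v) ⬝ᵥ (Q *ᵥ v) = v ⬝ᵥ v
  rw [dotProduct_mulVec, ← mulVec_transpose, mulVec_mulVec, hQ, one_mulVec]

theorem Matrix.one_kronecker_mul_apply {l m o R : Type*} [Fintype l] [Fintype m]
    [DecidableEq l] [CommSemiring R] (B : Matrix m m R) (A : Matrix (l × m) o R) (k : l) (i : m)
    (j : o) :
    (((1 : Matrix l l R) ⊗ₖ B) * A) (k, i) j = ∑ i', B i i' * A (k, i') j := by
  simp [mul_apply, Fintype.sum_prod_type, one_apply]

theorem Matrix.one_kronecker_mulVec_apply {l m R : Type*} [Fintype l] [Fintype m]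
    [DecidableEq l] [CommSemiring R] (B : Matrix m m R) (v : l × m → R) (k : l) (i : m) :
    (((1 : Matrix l l R) ⊗ₖ B) *ᵥ v) (k, i) = ∑ i', B i i' * v (k, i') := by
  simp [mulVec, dotProduct, Fintype.sum_prod_type, one_apply]

theorem Matrix.one_kronecker_transpose_mul_self {l m R : Type*} [Fintype l] [Fintype m]
    [DecidableEq l] [DecidableEq m] [CommSemiring R] {B : Matrix m m R} (hB : Bᵀ * B = 1) :
    ((1 : Matrix l l R) ⊗ₖ B)ᵀ * ((1 : Matrix l l R) ⊗ₖ B) = 1 := by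
  rw [← kroneckerMap_transpose, transpose_one, ← mul_kronecker_mul, Matrix.one_mul, hB,
    one_kronecker_one]

noncomputable def planeRotation (δ : ℝ) : Matrix (Fin 2) (Fin 2) ℝ :=
  !![Real.cos δ, -Real.sin δ; Real.sin δ, Real.cos δ]

noncomputable def rotationAboutFirstAxis (δ : ℝ) : Matrix (Fin 3) (Fin 3) ℝ :=
  !![1, 0, 0; 0, Real.cos δ, -Real.sin δ; 0, Real.sin δ, Real.cos δ]

theorem planeRotation_transpose_mul_self (δ : ℝ) :
    (planeRotation δ)ᵀ * planeRotation δ = 1 := by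
  have h := Real.sin_sq_add_cos_sq δ
  ext i j
  fin_cases i <;> fin_cases j <;> simp [planeRotation, mul_apply, Fin.sum_univ_two] <;>
    first | ring1 | linear_combination h

theorem rotationAboutFirstAxis_transpose_mul_self (δ : ℝ) :
    (rotationAboutFirstAxis δ)ᵀ * rotationAboutFirstAxis δ = 1 := by
  have h := Real.sin_sq_add_cos_sq δ
  ext i j
  fin_cases i <;> fin_cases j <;>
    simp [rotationAboutFirstAxis, mul_apply, Fin.sum_univ_three] <;>
    first | ring1 | linear_combination h

theorem rotationAboutFirstAxis_mulVec_zero (δ : ℝ) (v : Fin 3 → ℝ) :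
    (rotationAboutFirstAxis δ *ᵥ v) 0 = v 0 := by
  simp [rotationAboutFirstAxis, mulVec, dotProduct, Fin.sum_univ_three]

theorem Hmat_add_mul_rotationAboutFirstAxis {K : ℕ} (φ : Fin K → ℝ) (T : Fin (K - 1) → ℝ)
    (lam Δφ δ : ℝ) :
    Hmat φ T lam (Δφ + δ) * rotationAboutFirstAxis δ
      = ((1 : Matrix (Fin (K - 1)) (Fin (K - 1)) ℝ) ⊗ₖ planeRotation δ) * Hmat φ T lam Δφ := by
  ext ⟨k, i⟩ j
  rw [mul_apply, Fin.sum_univ_three, one_kronecker_mul_apply, Fin.sum_univ_two]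
  fin_cases i <;> fin_cases j <;>
    simp [Hmat, ck, sk, planeRotation, rotationAboutFirstAxis, ← add_assoc,
      (Real.cos_add · δ), (Real.sin_add · δ)] <;>
    ring

theorem Hmat_add {K : ℕ} (φ : Fin K → ℝ) (T : Fin (K - 1) → ℝ) (lam Δφ δ : ℝ) :
    Hmat φ T lam (Δφ + δ) = ((1 : Matrix (Fin (K - 1)) (Fin (K - 1)) ℝ) ⊗ₖ planeRotation δ) *
      Hmat φ T lam Δφ * (rotationAboutFirstAxis δ)ᵀ := by
  rw [← Hmat_add_mul_rotationAboutFirstAxis, Matrix.mul_assoc,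
    mul_eq_one_comm.mp (rotationAboutFirstAxis_transpose_mul_self δ), Matrix.mul_one]

theorem yvec_add {K : ℕ} (ρ φ : Fin K → ℝ) (lam Δφ δ : ℝ) :
    yvec ρ φ lam (Δφ + δ)
      = ((1 : Matrix (Fin (K - 1)) (Fin (K - 1)) ℝ) ⊗ₖ planeRotation δ) *ᵥ yvec ρ φ lam Δφ := by
  ext ⟨k, i⟩
  rw [one_kronecker_mulVec_apply, Fin.sum_univ_two]
  fin_cases i <;>
    simp [yvec, yck, ysk, planeRotation, ← add_assoc, (Real.cos_add · δ),
      (Real.sin_add · δ)] <;> ring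

theorem range_bias_and_objective_independent_of_azimuth_general
    (K : ℕ) (ρ φ : Fin K → ℝ) (T : Fin (K - 1) → ℝ) (lam : ℝ) (Δφ Δφ' : ℝ) :
    ((((Hmat φ T lam Δφ)ᵀ * Hmat φ T lam Δφ)⁻¹ *ᵥ ((Hmat φ T lam Δφ)ᵀ *ᵥ yvec ρ φ lam Δφ)) 0
      = ((((Hmat φ T lam Δφ')ᵀ * Hmat φ T lam Δφ')⁻¹ *ᵥ
          ((Hmat φ T lam Δφ')ᵀ *ᵥ yvec ρ φ lam Δφ')) 0)) ∧
    (∑ p, ((Hmat φ T lam Δφ *ᵥ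
          ((((Hmat φ T lam Δφ)ᵀ * Hmat φ T lam Δφ)⁻¹ *ᵥ
            ((Hmat φ T lam Δφ)ᵀ *ᵥ yvec ρ φ lam Δφ)))) p - yvec ρ φ lam Δφ p) ^ 2
      = ∑ p, ((Hmat φ T lam Δφ' *ᵥ
          ((((Hmat φ T lam Δφ')ᵀ * Hmat φ T lam Δφ')⁻¹ *ᵥ
            ((Hmat φ T lam Δφ')ᵀ *ᵥ yvec ρ φ lam Δφ')))) p - yvec ρ φ lam Δφ' p) ^ 2) := by
  obtain ⟨δ, rfl⟩ : ∃ δ, Δφ = Δφ' + δ := ⟨Δφ - Δφ', by ring⟩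
  have hQ :=
    one_kronecker_transpose_mul_self (l := Fin (K - 1)) (planeRotation_transpose_mul_self δ)
  have hS := rotationAboutFirstAxis_transpose_mul_self δ
  have hsol : LeastSquares.solution (Hmat φ T lam (Δφ' + δ)) (yvec ρ φ lam (Δφ' + δ))
      = rotationAboutFirstAxis δ *ᵥ
          LeastSquares.solution (Hmat φ T lam Δφ') (yvec ρ φ lam Δφ') := by
    rw [Hmat_add, yvec_add, LeastSquares.solution_mul_of_mul_eq_one hS,
      LeastSquares.solution_orthogonal_mul hQ]
  have hres : LeastSquares.residual (Hmat φ T lam (Δφ' + δ)) (yvec ρ φ lam (Δφ' + δ))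
      = (1 ⊗ₖ planeRotation δ) *ᵥ
          LeastSquares.residual (Hmat φ T lam Δφ') (yvec ρ φ lam Δφ') := by
    rw [Hmat_add, yvec_add, LeastSquares.residual_mul_of_mul_eq_one hS,
      LeastSquares.residual_orthogonal_mul hQ]
  -- the two conjuncts are `solution … 0` and `∑ p, residual … p ^ 2`, unfolded
  exact ⟨(congrFun hsol 0).trans (rotationAboutFirstAxis_mulVec_zero δ _),
    (congrArg (fun r => ∑ p, r p ^ 2) hres).trans (sum_sq_mulVec_of_transpose_mul_self hQ _)⟩

/-- Theorem 1 (separation property), least-squares form: the optimal range bias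
(first component of `(HᵀH)⁻¹Hᵀy`) and the optimal least-squares objective value
are independent of the azimuth bias `Δφ`. -/
theorem range_bias_and_objective_independent_of_azimuth
    (K : ℕ) (hK : 2 ≤ K) (ρ φ : Fin K → ℝ) (T : Fin (K - 1) → ℝ) (lam : ℝ) (hlam : 0 < lam)
    (hrank : ∀ Δφ : ℝ, (Hmat φ T lam Δφ).rank = 3) (Δφ Δφ' : ℝ) :
    ((((Hmat φ T lam Δφ)ᵀ * Hmat φ T lam Δφ)⁻¹ *ᵥ ((Hmat φ T lam Δφ)ᵀ *ᵥ yvec ρ φ lam Δφ)) 0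
      = ((((Hmat φ T lam Δφ')ᵀ * Hmat φ T lam Δφ')⁻¹ *ᵥ
          ((Hmat φ T lam Δφ')ᵀ *ᵥ yvec ρ φ lam Δφ')) 0)) ∧
    (∑ p, ((Hmat φ T lam Δφ *ᵥ
          ((((Hmat φ T lam Δφ)ᵀ * Hmat φ T lam Δφ)⁻¹ *ᵥ
            ((Hmat φ T lam Δφ)ᵀ *ᵥ yvec ρ φ lam Δφ)))) p - yvec ρ φ lam Δφ p) ^ 2
      = ∑ p, ((Hmat φ T lam Δφ' *ᵥ
          ((((Hmat φ T lam Δφ')ᵀ * Hmat φ T lam Δφ')⁻¹ *ᵥ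
            ((Hmat φ T lam Δφ')ᵀ *ᵥ yvec ρ φ lam Δφ')))) p - yvec ρ φ lam Δφ' p) ^ 2) :=
  range_bias_and_objective_independent_of_azimuth_general K ρ φ T lam Δφ Δφ'
end

section
/- For all Δφ, Δφ', Δρ ∈ ℝ, the infimum over v ∈ ℂ of F(Δφ, Δρ, v) equals the infimum over v ∈ ℂ of F(Δφ', Δρ, v). Consequently, for every Δρ₀ ∈ ℝ, Δρ₀ minimizes the function Δρ ↦ inf_{v∈ℂ} F(Δφ, Δρ, v) if and only if Δρ₀ minimizes the function Δρ ↦ inf_{v∈ℂ} F(Δφ', Δρ, v); that is, the optimal range bias and the optimal objective value of the single-sensor registration problem do not depend on the azimuth bias Δφ. -/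
/-- The bias-corrected measurement `g_k(Δφ, Δρ) = λ⁻¹ (ρ_k + Δρ) exp(i(φ_k + Δφ)) ∈ ℂ`. -/
noncomputable def gmeas {K : ℕ} (ρ φ : Fin K → ℝ) (lam : ℝ) (Δφ Δρ : ℝ) (k : Fin K) : ℂ :=
  ((lam⁻¹ * (ρ k + Δρ) : ℝ) : ℂ) * Complex.exp (Complex.I * ((φ k + Δφ : ℝ) : ℂ))

/-- The single-sensor least-squares objective
`F(Δφ, Δρ, v) = Σ_{k=1}^{K−1} |g_{k+1}(Δφ, Δρ) − g_k(Δφ, Δρ) − T_k v|²`. -/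
noncomputable def Fobj {K : ℕ} (ρ φ : Fin K → ℝ) (T : Fin (K - 1) → ℝ) (lam : ℝ)
    (Δφ Δρ : ℝ) (v : ℂ) : ℝ :=
  ∑ k : Fin (K - 1),
    ‖gmeas ρ φ lam Δφ Δρ (hiIdx k) - gmeas ρ φ lam Δφ Δρ (loIdx k)
      - (T k : ℂ) * v‖ ^ 2

section AzimuthRotation

variable {K : ℕ} (ρ φ : Fin K → ℝ) (T : Fin (K - 1) → ℝ) (lam : ℝ)

theorem gmeas_add_azimuth (Δφ θ Δρ : ℝ) (k : Fin K) :
    gmeas ρ φ lam (Δφ + θ) Δρ k = Circle.exp θ * gmeas ρ φ lam Δφ Δρ k := by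
  rw [gmeas, gmeas, Circle.coe_exp, mul_left_comm, ← Complex.exp_add]
  push_cast
  ring_nf

theorem norm_mul_circle_sub_sub (u : Circle) (a b c v : ℂ) :
    ‖u * a - u * b - c * (u * v)‖ = ‖a - b - c * v‖ := by
  rw [show (u : ℂ) * a - u * b - c * (u * v) = u * (a - b - c * v) by ring, norm_mul,
    Circle.norm_coe, one_mul]

theorem Fobj_add_azimuth (Δφ θ Δρ : ℝ) (v : ℂ) :
    Fobj ρ φ T lam (Δφ + θ) Δρ (Circle.exp θ * v) = Fobj ρ φ T lam Δφ Δρ v := by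
  simp only [Fobj, gmeas_add_azimuth, norm_mul_circle_sub_sub]

theorem iInf_Fobj_add_azimuth (Δφ θ Δρ : ℝ) :
    ⨅ v : ℂ, Fobj ρ φ T lam (Δφ + θ) Δρ v = ⨅ v : ℂ, Fobj ρ φ T lam Δφ Δρ v :=
  ((mul_left_surjective₀ (Circle.coe_ne_zero (Circle.exp θ))).iInf_congr _
    (Fobj_add_azimuth ρ φ T lam Δφ θ Δρ)).symm

theorem iInf_Fobj_congr_azimuth (Δφ Δφ' Δρ : ℝ) :
    ⨅ v : ℂ, Fobj ρ φ T lam Δφ Δρ v = ⨅ v : ℂ, Fobj ρ φ T lam Δφ' Δρ v := by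
  rw [← add_sub_cancel Δφ Δφ', iInf_Fobj_add_azimuth]

end AzimuthRotation

theorem range_bias_estimation_independent_of_azimuth_general
    (K : ℕ) (ρ φ : Fin K → ℝ) (T : Fin (K - 1) → ℝ) (lam : ℝ) :
    (∀ Δφ Δφ' Δρ : ℝ,
      (⨅ v : ℂ, Fobj ρ φ T lam Δφ Δρ v) = ⨅ v : ℂ, Fobj ρ φ T lam Δφ' Δρ v) ∧
    (∀ Δφ Δφ' Δρ₀ : ℝ,
      (∀ Δρ : ℝ, (⨅ v : ℂ, Fobj ρ φ T lam Δφ Δρ₀ v) ≤ ⨅ v : ℂ, Fobj ρ φ T lam Δφ Δρ v) ↔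
      (∀ Δρ : ℝ, (⨅ v : ℂ, Fobj ρ φ T lam Δφ' Δρ₀ v) ≤ ⨅ v : ℂ, Fobj ρ φ T lam Δφ' Δρ v)) := by
  refine ⟨iInf_Fobj_congr_azimuth ρ φ T lam, fun Δφ Δφ' Δρ₀ => ?_⟩
  simp only [iInf_Fobj_congr_azimuth ρ φ T lam Δφ Δφ']

/-- Theorem 1 (separation property): the partial minimum of the single-sensor objective over
the velocity `v` does not depend on the azimuth bias `Δφ`; consequently the optimal range bias
and the optimal objective value of the single-sensor registration problem are independent
of `Δφ`. -/
theorem range_bias_estimation_independent_of_azimuth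
    (K : ℕ) (hK : 2 ≤ K) (ρ φ : Fin K → ℝ) (T : Fin (K - 1) → ℝ) (lam : ℝ) (hlam : 0 < lam) :
    (∀ Δφ Δφ' Δρ : ℝ,
      (⨅ v : ℂ, Fobj ρ φ T lam Δφ Δρ v) = ⨅ v : ℂ, Fobj ρ φ T lam Δφ' Δρ v) ∧
    (∀ Δφ Δφ' Δρ₀ : ℝ,
      (∀ Δρ : ℝ, (⨅ v : ℂ, Fobj ρ φ T lam Δφ Δρ₀ v) ≤ ⨅ v : ℂ, Fobj ρ φ T lam Δφ Δρ v) ↔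
      (∀ Δρ : ℝ, (⨅ v : ℂ, Fobj ρ φ T lam Δφ' Δρ₀ v) ≤ ⨅ v : ℂ, Fobj ρ φ T lam Δφ' Δρ v)) :=
  range_bias_estimation_independent_of_azimuth_general K ρ φ T lam
end

section
/- Assume λ = 1 and the noiseless single-sensor model: there exist target positions ξ₁,…,ξ_K ∈ ℂ, a sensor position p ∈ ℂ, a constant velocity v̄ ∈ ℂ, and true biases Δρ̄, Δφ̄ ∈ ℝ such that ξ_{k+1} = ξ_k + T_k·v̄ for k = 1,…,K−1 and (ρ_k + Δρ̄)·exp(i(φ_k + Δφ̄)) = ξ_k − p for k = 1,…,K. Then: (i) for every Δφ ∈ ℝ, F(Δφ, Δρ̄, e^{i(Δφ−Δφ̄)}·v̄) = 0, so the optimal objective value is zero for every Δφ; and (ii) if moreover the linear map ℝ × ℂ → ℂ^{K−1} sending (a, w) to the vector with k-th component a·(exp(i(φ_{k+1}+Δφ)) − exp(i(φ_k+Δφ))) − T_k·w is injective, then every pair (Δρ, v) ∈ ℝ × ℂ with F(Δφ, Δρ, v) = 0 satisfies Δρ = Δρ̄; that is, the least-squares solution exactly recovers the true range bias for every choice of the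 azimuth bias Δφ. -/
/-! At the true range bias `Δρ̄`, `g_k` is the relative position `ξ_k - p` rotated by `Δφ - Δφ̄`,
so the rotated true velocity makes every step residual `g_{k+1} - g_k - T_k v` vanish, whatever
`Δφ`. As `g_k` is affine in `Δρ`, two residuals at the same `Δφ` differ by the linear map of the
injectivity hypothesis applied to `(Δρ - Δρ', v - v')`, so any other zero of `F` has `Δρ = Δρ̄`. -/

open Complex

section Residual

variable {K : ℕ} (ρ φ : Fin K → ℝ) (T : Fin (K - 1) → ℝ) (lam Δφ : ℝ)

noncomputable def stepResidual (Δρ : ℝ) (v : ℂ) (k : Fin (K - 1)) : ℂ :=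
  gmeas ρ φ lam Δφ Δρ (hiIdx k) - gmeas ρ φ lam Δφ Δρ (loIdx k) - (T k : ℂ) * v

theorem Fobj_eq_zero_iff (Δρ : ℝ) (v : ℂ) :
    Fobj ρ φ T lam Δφ Δρ v = 0 ↔ ∀ k, stepResidual ρ φ T lam Δφ Δρ v k = 0 := by
  rw [Fobj, Finset.sum_eq_zero_iff_of_nonneg fun k _ => by positivity]
  simp [stepResidual]

theorem stepResidual_sub_stepResidual (Δρ Δρ' : ℝ) (v v' : ℂ) (k : Fin (K - 1)) :
    stepResidual ρ φ T lam Δφ Δρ v k - stepResidual ρ φ T lam Δφ Δρ' v' k =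
      ((lam⁻¹ * (Δρ - Δρ') : ℝ) : ℂ) * (exp (I * ((φ (hiIdx k) + Δφ : ℝ) : ℂ))
          - exp (I * ((φ (loIdx k) + Δφ : ℝ) : ℂ)))
        - (T k : ℂ) * (v - v') := by
  simp only [stepResidual, gmeas]
  push_cast
  ring

end Residual

theorem gmeas_one_eq_rotate {K : ℕ} {ρ φ : Fin K → ℝ} {ξ : Fin K → ℂ} {p : ℂ} {Δρbar Δφbar : ℝ}
    (hmeas : ∀ k : Fin K,
      ((ρ k + Δρbar : ℝ) : ℂ) * exp (I * ((φ k + Δφbar : ℝ) : ℂ)) = ξ k - p)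
    (Δφ : ℝ) (k : Fin K) :
    gmeas ρ φ 1 Δφ Δρbar k = exp (I * ((Δφ - Δφbar : ℝ) : ℂ)) * (ξ k - p) := by
  have hangle : I * ((φ k + Δφ : ℝ) : ℂ) =
      I * ((Δφ - Δφbar : ℝ) : ℂ) + I * ((φ k + Δφbar : ℝ) : ℂ) := by
    push_cast; ring
  rw [← hmeas k, gmeas, hangle, exp_add]
  push_cast
  ring

theorem stepResidual_true_eq_zero {K : ℕ} {ρ φ : Fin K → ℝ} {T : Fin (K - 1) → ℝ} {ξ : Fin K → ℂ}
    {p vbar : ℂ} {Δρbar Δφbar : ℝ}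
    (hmotion : ∀ k : Fin (K - 1), ξ (hiIdx k) = ξ (loIdx k) + (T k : ℂ) * vbar)
    (hmeas : ∀ k : Fin K,
      ((ρ k + Δρbar : ℝ) : ℂ) * exp (I * ((φ k + Δφbar : ℝ) : ℂ)) = ξ k - p)
    (Δφ : ℝ) (k : Fin (K - 1)) :
    stepResidual ρ φ T 1 Δφ Δρbar (exp (I * ((Δφ - Δφbar : ℝ) : ℂ)) * vbar) k = 0 := by
  rw [stepResidual, gmeas_one_eq_rotate hmeas, gmeas_one_eq_rotate hmeas, hmotion k]
  ring

theorem noiseless_single_sensor_exact_range_recovery_general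
    (K : ℕ) (ρ φ : Fin K → ℝ) (T : Fin (K - 1) → ℝ) (lam : ℝ) (hlam : lam = 1)
    (ξ : Fin K → ℂ) (p vbar : ℂ) (Δρbar Δφbar : ℝ)
    (hmotion : ∀ k : Fin (K - 1), ξ (hiIdx k) = ξ (loIdx k) + (T k : ℂ) * vbar)
    (hmeas : ∀ k : Fin K,
      ((ρ k + Δρbar : ℝ) : ℂ) * Complex.exp (Complex.I * ((φ k + Δφbar : ℝ) : ℂ)) = ξ k - p) :
    (∀ Δφ : ℝ,
      Fobj ρ φ T lam Δφ Δρbar (Complex.exp (Complex.I * ((Δφ - Δφbar : ℝ) : ℂ)) * vbar) = 0) ∧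
    (∀ Δφ : ℝ,
      Function.Injective (fun aw : ℝ × ℂ => fun k : Fin (K - 1) =>
        (aw.1 : ℂ) * (Complex.exp (Complex.I * ((φ (hiIdx k) + Δφ : ℝ) : ℂ))
            - Complex.exp (Complex.I * ((φ (loIdx k) + Δφ : ℝ) : ℂ)))
          - (T k : ℂ) * aw.2) →
      ∀ (Δρ : ℝ) (v : ℂ), Fobj ρ φ T lam Δφ Δρ v = 0 → Δρ = Δρbar) := by
  subst hlam
  refine ⟨fun Δφ => (Fobj_eq_zero_iff ..).mpr (stepResidual_true_eq_zero hmotion hmeas Δφ), ?_⟩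
  intro Δφ hinj Δρ v hF
  have hzero := hinj (a₁ := (Δρ - Δρbar, v - exp (I * ((Δφ - Δφbar : ℝ) : ℂ)) * vbar))
    (a₂ := (0, 0)) <| funext fun k => by
      have h := stepResidual_sub_stepResidual ρ φ T 1 Δφ Δρ Δρbar v
        (exp (I * ((Δφ - Δφbar : ℝ) : ℂ)) * vbar) k
      rw [(Fobj_eq_zero_iff ..).mp hF k, stepResidual_true_eq_zero hmotion hmeas Δφ k,
        inv_one, one_mul] at h
      simpa using h.symm
  linarith [congrArg Prod.fst hzero]

/-- Corollary 1 (exact recovery of the range bias in the noiseless single-sensor case):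
with `λ = 1`, if the target moves with constant velocity and the measurements are noiseless,
then (i) the objective value `F(Δφ, Δρ̄, e^{i(Δφ−Δφ̄)}v̄)` is zero for every azimuth bias `Δφ`,
and (ii) under an injectivity (full-rank) condition, any zero of `F(Δφ, ·, ·)` has range
bias equal to the true range bias `Δρ̄`. -/
theorem noiseless_single_sensor_exact_range_recovery
    (K : ℕ) (hK : 2 ≤ K) (ρ φ : Fin K → ℝ) (T : Fin (K - 1) → ℝ) (lam : ℝ) (hlam : lam = 1)
    (ξ : Fin K → ℂ) (p vbar : ℂ) (Δρbar Δφbar : ℝ)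
    (hmotion : ∀ k : Fin (K - 1), ξ (hiIdx k) = ξ (loIdx k) + (T k : ℂ) * vbar)
    (hmeas : ∀ k : Fin K,
      ((ρ k + Δρbar : ℝ) : ℂ) * Complex.exp (Complex.I * ((φ k + Δφbar : ℝ) : ℂ)) = ξ k - p) :
    (∀ Δφ : ℝ,
      Fobj ρ φ T lam Δφ Δρbar (Complex.exp (Complex.I * ((Δφ - Δφbar : ℝ) : ℂ)) * vbar) = 0) ∧
    (∀ Δφ : ℝ,
      Function.Injective (fun aw : ℝ × ℂ => fun k : Fin (K - 1) =>
        (aw.1 : ℂ) * (Complex.exp (Complex.I * ((φ (hiIdx k) + Δφ : ℝ) : ℂ))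
            - Complex.exp (Complex.I * ((φ (loIdx k) + Δφ : ℝ) : ℂ)))
          - (T k : ℂ) * aw.2) →
      ∀ (Δρ : ℝ) (v : ℂ), Fobj ρ φ T lam Δφ Δρ v = 0 → Δρ = Δρbar) :=
  noiseless_single_sensor_exact_range_recovery_general K ρ φ T lam hlam ξ p vbar Δρbar Δφbar hmotion
    hmeas
end

section
/- Let σ ≥ 0, let μ be the Gaussian probability measure on ℝ with mean 0 and variance σ², and let ν be any probability measure on ℝ with finite first moment and mean zero (∫_ℝ r dν(r) = 0). Then for all ρ, φ ∈ ℝ, the function (r, u) ↦ (ρ + r)·exp(i(φ + u)) is integrable with respect to the product measure ν × μ on ℝ × ℝ and ∫_{ℝ×ℝ} (ρ + r)·exp(i(φ + u)) d(ν × μ)(r, u) = e^{−σ²/2}·ρ·e^{iφ}. Equivalently, with λ = e^{−σ²/2}, the debiased spherical-to-Cartesian conversion is unbiased: E[λ⁻¹(ρ + r)·cos(φ + u)] = ρ·cos φ and E[λ⁻¹(ρ + r)·sin(φ + u)] = ρ·sin φ, where r has zero-mean law ν and u has law μ independently. -/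
open MeasureTheory ProbabilityTheory

/-! By independence the mean of `(ρ + r) e^{i(φ + u)}` factors as `E[ρ + r] · e^{iφ} E[e^{iu}]`.
The first factor is `ρ` because `r` has mean zero, and `E[e^{iu}]` is the characteristic function
of the azimuth noise at `1`, which for the centred Gaussian is `e^{−σ²/2}`. The cosine and sine
statements are the real and imaginary parts of this identity. -/

section
open Complex

variable {μ : Measure ℝ}

lemma integrable_cexp_I_mul_ofReal_add [IsFiniteMeasure μ] (φ : ℝ) :
    Integrable (fun u : ℝ => cexp (I * ((φ + u : ℝ) : ℂ))) μ :=
  Integrable.of_bound (by fun_prop) 1 (.of_forall fun u => (norm_exp_I_mul_ofReal _).le)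

lemma integral_cexp_I_mul_ofReal_add (φ : ℝ) :
    ∫ u : ℝ, cexp (I * ((φ + u : ℝ) : ℂ)) ∂μ = cexp (I * φ) * charFun μ 1 := by
  rw [charFun_apply_real, ← integral_const_mul]
  congr 1 with u
  rw [← Complex.exp_add]
  push_cast
  ring_nf

lemma charFun_gaussianReal_zero_one (v : NNReal) :
    charFun (gaussianReal 0 v) 1 = ((Real.exp (-v / 2) : ℝ) : ℂ) := by
  rw [charFun_gaussianReal]
  push_cast
  ring_nf

lemma re_ofReal_mul_cexp_I_mul (a b : ℝ) : ((a : ℂ) * cexp (I * b)).re = a * Real.cos b := by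
  rw [re_ofReal_mul, mul_comm I, exp_ofReal_mul_I_re]

lemma im_ofReal_mul_cexp_I_mul (a b : ℝ) : ((a : ℂ) * cexp (I * b)).im = a * Real.sin b := by
  rw [im_ofReal_mul, mul_comm I, exp_ofReal_mul_I_im]

variable {α : Type*} [MeasurableSpace α] {m : Measure α} {f g : α → ℝ}

lemma integral_mul_cos_eq_re (hF : Integrable (fun x => (f x : ℂ) * cexp (I * g x)) m) :
    ∫ x, f x * Real.cos (g x) ∂m = (∫ x, (f x : ℂ) * cexp (I * g x) ∂m).re := by
  simp_rw [← re_ofReal_mul_cexp_I_mul]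
  exact integral_re hF

lemma integral_mul_sin_eq_im (hF : Integrable (fun x => (f x : ℂ) * cexp (I * g x)) m) :
    ∫ x, f x * Real.sin (g x) ∂m = (∫ x, (f x : ℂ) * cexp (I * g x) ∂m).im := by
  simp_rw [← im_ofReal_mul_cexp_I_mul]
  exact integral_im hF

lemma integrable_prod_ofReal_add_mul_cexp_I_mul {ν μ : Measure ℝ} [IsFiniteMeasure ν]
    [IsFiniteMeasure μ] (hν : Integrable (fun r : ℝ => r) ν) (ρ φ : ℝ) :
    Integrable (fun q : ℝ × ℝ => ((ρ + q.1 : ℝ) : ℂ) * cexp (I * ((φ + q.2 : ℝ) : ℂ)))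
      (ν.prod μ) :=
  ((integrable_const ρ).add hν).ofReal.mul_prod (integrable_cexp_I_mul_ofReal_add φ)

lemma integral_prod_ofReal_add_mul_cexp_I_mul (ν μ : Measure ℝ) [SFinite ν] [SFinite μ]
    (ρ φ : ℝ) :
    ∫ q : ℝ × ℝ, ((ρ + q.1 : ℝ) : ℂ) * cexp (I * ((φ + q.2 : ℝ) : ℂ)) ∂ν.prod μ
      = ((∫ r, ρ + r ∂ν : ℝ) : ℂ) * (cexp (I * φ) * charFun μ 1) := by
  rw [integral_prod_mul (fun r : ℝ => ((ρ + r : ℝ) : ℂ))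
    (fun u : ℝ => cexp (I * ((φ + u : ℝ) : ℂ))), integral_complex_ofReal,
    integral_cexp_I_mul_ofReal_add]

end

theorem debiased_polar_to_cartesian_unbiased_general
    (σ : ℝ)
    (ν : Measure ℝ) [IsProbabilityMeasure ν]
    (hint : Integrable (fun r : ℝ => r) ν) (hmean : (∫ r, r ∂ν) = 0)
    (ρ φ : ℝ) :
    Integrable
      (fun q : ℝ × ℝ => ((ρ + q.1 : ℝ) : ℂ) * Complex.exp (Complex.I * ((φ + q.2 : ℝ) : ℂ)))
      (ν.prod (gaussianReal 0 (Real.toNNReal (σ ^ 2)))) ∧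
    (∫ q : ℝ × ℝ, ((ρ + q.1 : ℝ) : ℂ) * Complex.exp (Complex.I * ((φ + q.2 : ℝ) : ℂ))
        ∂(ν.prod (gaussianReal 0 (Real.toNNReal (σ ^ 2)))))
      = ((Real.exp (-σ ^ 2 / 2) : ℝ) : ℂ) * (ρ : ℂ) * Complex.exp (Complex.I * (φ : ℂ)) ∧
    (∫ q : ℝ × ℝ, (Real.exp (-σ ^ 2 / 2))⁻¹ * (ρ + q.1) * Real.cos (φ + q.2)
        ∂(ν.prod (gaussianReal 0 (Real.toNNReal (σ ^ 2)))))
      = ρ * Real.cos φ ∧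
    (∫ q : ℝ × ℝ, (Real.exp (-σ ^ 2 / 2))⁻¹ * (ρ + q.1) * Real.sin (φ + q.2)
        ∂(ν.prod (gaussianReal 0 (Real.toNNReal (σ ^ 2)))))
      = ρ * Real.sin φ := by
  have hcharFun :
      charFun (gaussianReal 0 (σ ^ 2).toNNReal) 1 = ((Real.exp (-σ ^ 2 / 2) : ℝ) : ℂ) := by
    rw [charFun_gaussianReal_zero_one, Real.coe_toNNReal _ (sq_nonneg σ)]
  have hρ : ∫ r, ρ + r ∂ν = ρ := by
    simp [integral_add (integrable_const ρ) hint, hmean]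
  have hF := integrable_prod_ofReal_add_mul_cexp_I_mul
    (μ := gaussianReal 0 (σ ^ 2).toNNReal) hint ρ φ
  have hF_integral :
      ∫ q : ℝ × ℝ, ((ρ + q.1 : ℝ) : ℂ) * Complex.exp (Complex.I * ((φ + q.2 : ℝ) : ℂ))
        ∂(ν.prod (gaussianReal 0 (σ ^ 2).toNNReal))
      = ((Real.exp (-σ ^ 2 / 2) : ℝ) : ℂ) * (ρ : ℂ) * Complex.exp (Complex.I * (φ : ℂ)) := by
    rw [integral_prod_ofReal_add_mul_cexp_I_mul, hρ, hcharFun]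
    ring
  refine ⟨hF, hF_integral, ?_, ?_⟩
  all_goals
    simp_rw [mul_assoc]
    rw [integral_const_mul]
  · rw [integral_mul_cos_eq_re hF, hF_integral, ← Complex.ofReal_mul, re_ofReal_mul_cexp_I_mul]
    field_simp
  · rw [integral_mul_sin_eq_im hF, hF_integral, ← Complex.ofReal_mul, im_ofReal_mul_cexp_I_mul]
    field_simp

/-- The debiased spherical-to-Cartesian conversion is unbiased: if the range noise `r` has an
arbitrary zero-mean law `ν` and the azimuth noise `u` is Gaussian with mean `0` and variance
`σ²`, independent of `r`, then `(ρ + r)e^{i(φ + u)}` is integrable and its mean equals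
`e^{−σ²/2} ρ e^{iφ}`; equivalently, with `λ = e^{−σ²/2}`,
`E[λ⁻¹(ρ+r)cos(φ+u)] = ρ cos φ` and `E[λ⁻¹(ρ+r)sin(φ+u)] = ρ sin φ`. -/
theorem debiased_polar_to_cartesian_unbiased
    (σ : ℝ) (hσ : 0 ≤ σ)
    (ν : Measure ℝ) [IsProbabilityMeasure ν]
    (hint : Integrable (fun r : ℝ => r) ν) (hmean : (∫ r, r ∂ν) = 0)
    (ρ φ : ℝ) :
    Integrable
      (fun q : ℝ × ℝ => ((ρ + q.1 : ℝ) : ℂ) * Complex.exp (Complex.I * ((φ + q.2 : ℝ) : ℂ)))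
      (ν.prod (gaussianReal 0 (Real.toNNReal (σ ^ 2)))) ∧
    (∫ q : ℝ × ℝ, ((ρ + q.1 : ℝ) : ℂ) * Complex.exp (Complex.I * ((φ + q.2 : ℝ) : ℂ))
        ∂(ν.prod (gaussianReal 0 (Real.toNNReal (σ ^ 2)))))
      = ((Real.exp (-σ ^ 2 / 2) : ℝ) : ℂ) * (ρ : ℂ) * Complex.exp (Complex.I * (φ : ℂ)) ∧
    (∫ q : ℝ × ℝ, (Real.exp (-σ ^ 2 / 2))⁻¹ * (ρ + q.1) * Real.cos (φ + q.2)
        ∂(ν.prod (gaussianReal 0 (Real.toNNReal (σ ^ 2)))))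
      = ρ * Real.cos φ ∧
    (∫ q : ℝ × ℝ, (Real.exp (-σ ^ 2 / 2))⁻¹ * (ρ + q.1) * Real.sin (φ + q.2)
        ∂(ν.prod (gaussianReal 0 (Real.toNNReal (σ ^ 2)))))
      = ρ * Real.sin φ :=
  debiased_polar_to_cartesian_unbiased_general σ ν hint hmean ρ φ
end

section
/- Suppose there exist a matrix X ∈ ℂ^{(M+1)×(M+1)} and a vector y ∈ ℝ^{M+1} such that: (1) X is Hermitian positive semidefinite with all diagonal entries equal to 1; (2) C + Diag(y) is positive semidefinite; (3) (C + Diag(y))·X = 0; and (4) H†PH + Diag(y₁,…,y_M) is positive definite. Then X has rank one, and X is the unique minimizer of the SDP: for every Hermitian positive semidefinite X' ∈ ℂ^{(M+1)×(M+1)} with all diagonal entries equal to 1 and X' ≠ X, one has Re Tr(C·X') > Re Tr(C·X). -/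
/-!
`S = C + Diag(y)` is a dual certificate. Because the leading `M × M` block of `S` is positive
definite, a vector in the kernel of `S` is determined by its last coordinate. Every column of a
Hermitian `Z` with `S Z = 0` lies in that kernel, so if also `Z₀₀ = 1` (0 the last index), column
`j` equals `Z₀ⱼ` times column `0`, i.e. `Z = v v†` with `v` the last column; and two such matrices
have the same last column, hence coincide. So `X = v v†` has rank one, and any other feasible `X'`
has `S X' ≠ 0`, whence `Re Tr(S X') > 0 = Tr(S X)` as `S, X' ⪰ 0`. On unit-diagonal matrices
`Tr(S Z) = Tr(C Z) + ∑ yᵢ`, so `X'` has the strictly larger objective.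
-/

open Matrix
open scoped ComplexOrder

/-- `P = I_{K−1} − ‖t‖⁻² t tᵀ`, regarded as a complex `(K−1)×(K−1)` matrix; it is the
orthogonal projection onto the orthogonal complement of the time-difference vector `t`. -/
noncomputable def Pmat {K : ℕ} (t : Fin (K - 1) → ℝ) :
    Matrix (Fin (K - 1)) (Fin (K - 1)) ℂ :=
  1 - Matrix.of fun i j => (((∑ k, t k ^ 2)⁻¹ * (t i * t j) : ℝ) : ℂ)

/-- The Hermitian block matrix `C = [[H†PH, H†Pc],[c†PH, 0]] ∈ ℂ^{(M+1)×(M+1)}`, indexed by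
`Fin M ⊕ Fin 1` (the last index playing the role of the homogenization coordinate). -/
noncomputable def Cmat {K M : ℕ} (H : Matrix (Fin (K - 1)) (Fin M) ℂ)
    (c : Fin (K - 1) → ℂ) (t : Fin (K - 1) → ℝ) :
    Matrix (Fin M ⊕ Fin 1) (Fin M ⊕ Fin 1) ℂ :=
  Matrix.fromBlocks (Hᴴ * Pmat t * H)
    (Matrix.of fun i _ => (Hᴴ *ᵥ (Pmat t *ᵥ c)) i)
    (Matrix.of fun _ j => ((star c) ᵥ* (Pmat t * H)) j) 0

namespace Matrix

section RCLike

variable {𝕜 n : Type*} [RCLike 𝕜] [Fintype n] [DecidableEq n]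

theorem PosSemidef.trace_mul_pos {S Y : Matrix n n 𝕜} (hS : S.PosSemidef) (hY : Y.PosSemidef)
    (hSY : S * Y ≠ 0) : 0 < (S * Y).trace := by
  open MatrixOrder in
  obtain ⟨B, rfl⟩ := CStarAlgebra.nonneg_iff_eq_star_mul_self.mp hS.nonneg
  open MatrixOrder in
  obtain ⟨G, rfl⟩ := CStarAlgebra.nonneg_iff_eq_star_mul_self.mp hY.nonneg
  set W := B * star G
  have hW : W ≠ 0 := fun h => hSY <| by
    rw [show star B * B * (star G * G) = star B * W * G by simp only [W]; noncomm_ring, h,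
      mul_zero, zero_mul]
  have htrace : (star B * B * (star G * G)).trace = (W * Wᴴ).trace := by
    rw [mul_assoc, trace_mul_comm]
    simp only [W, conjTranspose_mul, star_eq_conjTranspose, conjTranspose_conjTranspose,
      mul_assoc]
  rw [htrace]
  exact (posSemidef_self_mul_conjTranspose W).trace_nonneg.lt_of_ne
    (Ne.symm (mt trace_mul_conjTranspose_self_eq_zero_iff.mp hW))

end RCLike

theorem rank_vecMulVec_eq_one {K m n : Type*} [Field K] [Fintype n] [DecidableEq n]
    {w : m → K} {v : n → K} (hw : w ≠ 0) (hv : v ≠ 0) : (vecMulVec w v).rank = 1 := by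
  refine (rank_vecMulVec_le w v).antisymm (Nat.one_le_iff_ne_zero.mpr fun h => ?_)
  rw [rank, Submodule.finrank_eq_zero, LinearMap.range_eq_bot] at h
  have : vecMulVec w v = 0 := toLin'.injective (by rwa [map_zero, toLin'_apply'])
  obtain ⟨i, hi⟩ := Function.ne_iff.mp hw
  obtain ⟨j, hj⟩ := Function.ne_iff.mp hv
  exact mul_ne_zero hi hj (congrFun₂ this i j)

theorem trace_add_diagonal_mul_of_diag_eq_one {R n : Type*} [Semiring R] [Fintype n]
    [DecidableEq n] (A : Matrix n n R) (d : n → R) {Z : Matrix n n R} (hZ : ∀ i, Z i i = 1) :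
    ((A + diagonal d) * Z).trace = (A * Z).trace + ∑ i, d i := by
  simp [add_mul, trace, diagonal_mul, hZ, Finset.sum_add_distrib]

theorem eq_zero_of_mulVec_eq_zero_of_inr_eq_zero {R m o : Type*} [CommRing R] [Fintype m]
    [Fintype o] [DecidableEq m] {S : Matrix (m ⊕ o) (m ⊕ o) R} (hS : IsUnit S.toBlocks₁₁)
    {u : m ⊕ o → R} (hu : S *ᵥ u = 0) (hinr : ∀ j, u (Sum.inr j) = 0) : u = 0 := by
  have hinl : S.toBlocks₁₁ *ᵥ (u ∘ Sum.inl) = 0 := by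
    funext i
    simpa [mulVec, dotProduct, Fintype.sum_sum_type, hinr, toBlocks₁₁] using congrFun hu (.inl i)
  have := mulVec_injective_of_isUnit hS (hinl.trans (mulVec_zero _).symm)
  funext k
  rcases k with i | j
  · exact congrFun this i
  · exact hinr j

section KernelDeterminedByEntry

variable {R ι : Type*} [CommRing R] [Fintype ι]

theorem mulVec_col_eq_zero_of_mul_eq_zero {S Z : Matrix ι ι R} (h : S * Z = 0) (j : ι) :
    S *ᵥ (fun i => Z i j) = 0 := by
  funext i
  simpa [mul_apply, mulVec, dotProduct] using congrFun₂ h i j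

variable {S : Matrix ι ι R} {e : ι}

theorem eq_of_mulVec_eq_zero_of_apply_eq (hker : ∀ u, S *ᵥ u = 0 → u e = 0 → u = 0)
    {u w : ι → R} (hu : S *ᵥ u = 0) (hw : S *ᵥ w = 0) (h : u e = w e) : u = w :=
  sub_eq_zero.mp <|
    hker _ (by rw [mulVec_sub, hu, hw, sub_zero]) (by rw [Pi.sub_apply, h, sub_self])

variable [StarRing R]

theorem eq_vecMulVec_of_mul_eq_zero (hker : ∀ u, S *ᵥ u = 0 → u e = 0 → u = 0)
    {Z : Matrix ι ι R} (hSZ : S * Z = 0) (hZ : Z.IsHermitian) (he : Z e e = 1) :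
    Z = vecMulVec (fun i => Z i e) (star fun i => Z i e) := by
  ext i j
  have hcol : (fun i => Z i j) = Z e j • fun i => Z i e :=
    eq_of_mulVec_eq_zero_of_apply_eq hker (mulVec_col_eq_zero_of_mul_eq_zero hSZ j)
      (by rw [mulVec_smul, mulVec_col_eq_zero_of_mul_eq_zero hSZ e, smul_zero])
      (by simp [he])
  rw [congrFun hcol i, vecMulVec_apply, Pi.star_apply, hZ.apply e j, Pi.smul_apply, smul_eq_mul,
    mul_comm]

theorem eq_of_mul_eq_zero_of_isHermitian (hker : ∀ u, S *ᵥ u = 0 → u e = 0 → u = 0)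
    {Z Z' : Matrix ι ι R} (hSZ : S * Z = 0) (hSZ' : S * Z' = 0) (hZ : Z.IsHermitian)
    (hZ' : Z'.IsHermitian) (he : Z e e = 1) (he' : Z' e e = 1) : Z = Z' := by
  have hcol : (fun i => Z i e) = fun i => Z' i e :=
    eq_of_mulVec_eq_zero_of_apply_eq hker (mulVec_col_eq_zero_of_mul_eq_zero hSZ e)
      (mulVec_col_eq_zero_of_mul_eq_zero hSZ' e) (he.trans he'.symm)
  rw [eq_vecMulVec_of_mul_eq_zero hker hSZ hZ he, eq_vecMulVec_of_mul_eq_zero hker hSZ' hZ' he',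
    hcol]

end KernelDeterminedByEntry

end Matrix

theorem toBlocks₁₁_Cmat_add_diagonal {K M : ℕ} (H : Matrix (Fin (K - 1)) (Fin M) ℂ)
    (c : Fin (K - 1) → ℂ) (t : Fin (K - 1) → ℝ) (y : Fin M ⊕ Fin 1 → ℝ) :
    (Cmat H c t + diagonal fun i => (y i : ℂ)).toBlocks₁₁ =
      Hᴴ * Pmat t * H + diagonal fun m => (y (Sum.inl m) : ℂ) := by
  ext i j
  simp [Cmat, toBlocks₁₁, diagonal_apply]

theorem sdp_unique_rank_one_minimizer_general
    (M K : ℕ)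
    (H : Matrix (Fin (K - 1)) (Fin M) ℂ) (c : Fin (K - 1) → ℂ)
    (t : Fin (K - 1) → ℝ)
    (X : Matrix (Fin M ⊕ Fin 1) (Fin M ⊕ Fin 1) ℂ) (y : Fin M ⊕ Fin 1 → ℝ)
    (h1 : X.PosSemidef) (h1diag : ∀ i, X i i = 1)
    (h2 : (Cmat H c t + Matrix.diagonal fun i => (y i : ℂ)).PosSemidef)
    (h3 : (Cmat H c t + Matrix.diagonal fun i => (y i : ℂ)) * X = 0)
    (h4 : (Hᴴ * Pmat t * H + Matrix.diagonal fun m : Fin M => (y (Sum.inl m) : ℂ)).PosDef) :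
    X.rank = 1 ∧
    ∀ X' : Matrix (Fin M ⊕ Fin 1) (Fin M ⊕ Fin 1) ℂ, X'.PosSemidef → (∀ i, X' i i = 1) →
      X' ≠ X → (Cmat H c t * X).trace.re < (Cmat H c t * X').trace.re := by
  set S := Cmat H c t + diagonal fun i => (y i : ℂ)
  have hker : ∀ u, S *ᵥ u = 0 → u (Sum.inr 0) = 0 → u = 0 := fun u hu hu0 =>
    eq_zero_of_mulVec_eq_zero_of_inr_eq_zero
      (by rw [toBlocks₁₁_Cmat_add_diagonal]; exact h4.isUnit) hu (Fin.forall_fin_one.mpr hu0)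
  refine ⟨?_, fun X' hX' hX'diag hne => ?_⟩
  · rw [eq_vecMulVec_of_mul_eq_zero hker h3 h1.isHermitian (h1diag _)]
    have hv : (fun i => X i (Sum.inr 0)) ≠ 0 := fun h => by
      simpa [h1diag] using congrFun h (.inr 0)
    exact rank_vecMulVec_eq_one hv (star_ne_zero.mpr hv)
  · have hSX' : S * X' ≠ 0 := fun h =>
      hne (eq_of_mul_eq_zero_of_isHermitian hker h h3 hX'.isHermitian h1.isHermitian
        (hX'diag _) (h1diag _))
    have hpos := (Complex.pos_iff.mp (h2.trace_mul_pos hX' hSX')).1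
    have hre (Z) (hZ : ∀ i, Z i i = 1) :
        (S * Z).trace.re = (Cmat H c t * Z).trace.re + ∑ i, y i := by
      simp [S, trace_add_diagonal_mul_of_diag_eq_one _ _ hZ]
    have hX := hre X h1diag
    rw [h3, trace_zero, Complex.zero_re] at hX
    linarith [hre X' hX'diag]

/-- Lemma 1: sufficient conditions for the SDP relaxation to have a unique rank-one
minimizer. If `X` is feasible, `C + Diag(y)` is PSD, `(C + Diag(y))X = 0`, and
`H†PH + Diag(y_{1:M})` is positive definite, then `X` has rank one and is the unique
minimizer of the SDP. -/
theorem sdp_unique_rank_one_minimizer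
    (M K : ℕ) (hM : 1 ≤ M) (hK : 2 ≤ K)
    (H : Matrix (Fin (K - 1)) (Fin M) ℂ) (c : Fin (K - 1) → ℂ)
    (t : Fin (K - 1) → ℝ) (ht : t ≠ 0)
    (X : Matrix (Fin M ⊕ Fin 1) (Fin M ⊕ Fin 1) ℂ) (y : Fin M ⊕ Fin 1 → ℝ)
    (h1 : X.PosSemidef) (h1diag : ∀ i, X i i = 1)
    (h2 : (Cmat H c t + Matrix.diagonal fun i => (y i : ℂ)).PosSemidef)
    (h3 : (Cmat H c t + Matrix.diagonal fun i => (y i : ℂ)) * X = 0)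
    (h4 : (Hᴴ * Pmat t * H + Matrix.diagonal fun m : Fin M => (y (Sum.inl m) : ℂ)).PosDef) :
    X.rank = 1 ∧
    ∀ X' : Matrix (Fin M ⊕ Fin 1) (Fin M ⊕ Fin 1) ℂ, X'.PosSemidef → (∀ i, X' i i = 1) →
      X' ≠ X → (Cmat H c t * X).trace.re < (Cmat H c t * X').trace.re :=
  sdp_unique_rank_one_minimizer_general M K H c t X y h1 h1diag h2 h3 h4
end

section
/- Let C ∈ ℂ^{(M+1)×(M+1)} be Hermitian and y ∈ ℝ^{M+1} be such that the top-left M×M principal submatrix of C + Diag(y) is positive definite. If X ∈ ℂ^{(M+1)×(M+1)} is a nonzero matrix with (C + Diag(y))·X = 0, then rank(C + Diag(y)) = M and rank(X) = 1. -/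
open Matrix
open scoped ComplexOrder

lemma aux_rank_pos_of_ne_zero {n m : ℕ} (X : Matrix (Fin n) (Fin m) ℂ) (hX : X ≠ 0) :
    0 < X.rank := by
  rw [pos_iff_ne_zero]
  intro h
  apply hX
  have hr : LinearMap.range X.mulVecLin = ⊥ := Submodule.finrank_eq_zero.mp h
  ext i j
  have hmem : X.mulVecLin (Pi.single j 1) ∈ LinearMap.range X.mulVecLin :=
    LinearMap.mem_range_self _ _
  rw [hr, Submodule.mem_bot] at hmem
  have := congrFun hmem i
  simpa [Matrix.mulVecLin, Matrix.mulVec_single] using this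

lemma aux_rank_submatrix_le {n m p q : ℕ} (A : Matrix (Fin n) (Fin m) ℂ)
    (f : Fin p → Fin n) (g : Fin q → Fin m) :
    (A.submatrix f g).rank ≤ A.rank := by
  have key : A.submatrix f g =
      ((1 : Matrix (Fin n) (Fin n) ℂ).submatrix f ⇑(Equiv.refl (Fin n))) * A *
        ((1 : Matrix (Fin m) (Fin m) ℂ).submatrix ⇑(Equiv.refl (Fin m)) g) := by
    rw [Matrix.one_submatrix_mul, Matrix.mul_submatrix_one]
    simp
  rw [key]
  calc (((1 : Matrix (Fin n) (Fin n) ℂ).submatrix f ⇑(Equiv.refl (Fin n))) * A *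
        ((1 : Matrix (Fin m) (Fin m) ℂ).submatrix ⇑(Equiv.refl (Fin m)) g)).rank
      ≤ (((1 : Matrix (Fin n) (Fin n) ℂ).submatrix f ⇑(Equiv.refl (Fin n))) * A).rank :=
        Matrix.rank_mul_le_left _ _
    _ ≤ A.rank := Matrix.rank_mul_le_right _ _

/-- If the top-left `M×M` principal submatrix of `C + Diag(y)` is positive definite and
`(C + Diag(y))X = 0` for some nonzero `X`, then `rank(C + Diag(y)) = M` and `rank X = 1`. -/
theorem rank_one_from_positive_principal_submatrix
    (M : ℕ) (C : Matrix (Fin (M + 1)) (Fin (M + 1)) ℂ) (hC : C.IsHermitian)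
    (y : Fin (M + 1) → ℝ)
    (hpd : (((C + Matrix.diagonal fun i => (y i : ℂ)).submatrix
        (Fin.castSucc : Fin M → Fin (M + 1)) (Fin.castSucc : Fin M → Fin (M + 1)))).PosDef)
    (X : Matrix (Fin (M + 1)) (Fin (M + 1)) ℂ) (hX : X ≠ 0)
    (hprod : (C + Matrix.diagonal fun i => (y i : ℂ)) * X = 0) :
    (C + Matrix.diagonal fun i => (y i : ℂ)).rank = M ∧ X.rank = 1 := by
  set A := C + Matrix.diagonal fun i => (y i : ℂ) with hA
  have hsub : (A.submatrix (Fin.castSucc : Fin M → Fin (M + 1))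
      (Fin.castSucc : Fin M → Fin (M + 1))).rank = M := by
    rw [Matrix.rank_of_isUnit _ hpd.isUnit, Fintype.card_fin]
  have hAM : M ≤ A.rank :=
    le_trans (le_of_eq hsub.symm) (aux_rank_submatrix_le A _ _)
  have hsyl : A.rank + X.rank ≤ M + 1 := by
    have := Matrix.rank_add_rank_le_card_of_mul_eq_zero hprod
    simpa using this
  have hXpos : 0 < X.rank := aux_rank_pos_of_ne_zero X hX
  omega
end

section
/- Assume that PH has full column rank (equivalently, H†PH is positive definite) and that there exists x̄ ∈ ℂ^M with |x̄_m| = 1 for all m = 1,…,M and P(Hx̄ + c) = 0 (the noiseless case ΔH = 0). Let x* ∈ ℂ^{M+1} be the vector with x*_{1:M} = −(H†PH)⁻¹H†Pc and x*_{M+1} = 1. Then x*_{1:M} = x̄ (so |x*_m| = 1 for all m), and X* = x*(x*)† is the unique minimizer of the SDP: X* is Hermitian positive semidefinite of rank one with all diagonal entries equal to 1, and for every Hermitian positive semidefinite X' ∈ ℂ^{(M+1)×(M+1)} with all diagonal entries equal to 1 and X' ≠ X*, one has Re Tr(C·X') > Re Tr(C·X*). In particular the phases of x*₁/x*_{M+1},…,x*_M/x*_{M+1}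 exactly recover the true azimuth biases encoded in x̄. -/
/-!
Write `A = [H | c]`. The objective matrix `C` agrees with the Gram matrix `(PA)†(PA)` except in
the corner entry, which contributes the constant `-c†Pc` on the feasible set, and
`Tr((PA)†(PA) X) = ‖PA N†‖_F²` for `X = N†N`. The noiseless hypothesis says that `PA` kills
`x̂ = (x̄, 1)`, and positive definiteness of `H†PH` makes the kernel of `PA` exactly the line
through `x̂`. So `x̂x̂†` attains the smallest possible value, while a feasible `X` attaining it
satisfies `PA X = 0`: every column of `X` is a multiple of `x̂`, and Hermitian symmetry together
with `X_{M+1,M+1} = 1` then forces `X = x̂x̂†`. Finally `x* = x̂` because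
`H†PH x* = -H†Pc = H†PH x̄`.
-/

open Matrix
open scoped ComplexOrder

namespace Matrix

variable {l m n R 𝕜 : Type*} [Fintype n] [RCLike 𝕜]

theorem rank_vecMulVec_self_star {x : n → 𝕜} (hx : x ≠ 0) : (vecMulVec x (star x)).rank = 1 := by
  classical
  refine le_antisymm (rank_vecMulVec_le _ _) (Nat.one_le_iff_ne_zero.mpr fun h => hx ?_)
  rw [rank, Submodule.finrank_eq_zero, LinearMap.range_eq_bot] at h
  ext i
  simpa [vecMulVec_apply, RCLike.mul_conj] using
    congrFun (LinearMap.congr_fun h (Pi.single i 1)) i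

open scoped MatrixOrder in
theorem PosSemidef.exists_eq_conjTranspose_mul_self {X : Matrix n n 𝕜} (hX : X.PosSemidef) :
    ∃ N : Matrix n n 𝕜, X = Nᴴ * N := by
  classical
  exact CStarAlgebra.nonneg_iff_eq_star_mul_self.mp hX.nonneg

theorem trace_conjTranspose_mul_self_mul_conjTranspose_mul_self [Fintype l] [Fintype m]
    (D : Matrix m n 𝕜) (N : Matrix l n 𝕜) :
    (Dᴴ * D * (Nᴴ * N)).trace = ((D * Nᴴ)ᴴ * (D * Nᴴ)).trace := by
  rw [conjTranspose_mul, conjTranspose_conjTranspose, ← Matrix.mul_assoc, trace_mul_comm]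
  simp only [Matrix.mul_assoc]

theorem PosSemidef.trace_conjTranspose_mul_self_mul_nonneg [Fintype m] {X : Matrix n n 𝕜}
    (hX : X.PosSemidef) (D : Matrix m n 𝕜) : 0 ≤ (Dᴴ * D * X).trace := by
  obtain ⟨N, rfl⟩ := hX.exists_eq_conjTranspose_mul_self
  rw [trace_conjTranspose_mul_self_mul_conjTranspose_mul_self]
  exact (posSemidef_conjTranspose_mul_self _).trace_nonneg

theorem PosSemidef.mul_eq_zero_of_trace_conjTranspose_mul_self_mul_eq_zero [Fintype m]
    {X : Matrix n n 𝕜} (hX : X.PosSemidef) {D : Matrix m n 𝕜} (h : (Dᴴ * D * X).trace = 0) :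
    D * X = 0 := by
  obtain ⟨N, rfl⟩ := hX.exists_eq_conjTranspose_mul_self
  rw [trace_conjTranspose_mul_self_mul_conjTranspose_mul_self,
    trace_conjTranspose_mul_self_eq_zero_iff] at h
  rw [← Matrix.mul_assoc, h, Matrix.zero_mul]

theorem IsHermitian.eq_vecMulVec_of_mul_eq_zero [CommSemiring R] [StarRing R] {D : Matrix m n R}
    {x : n → R} {i₀ : n} (hker : ∀ u, D *ᵥ u = 0 → u = u i₀ • x) {X : Matrix n n R}
    (hX : X.IsHermitian) (hXi₀ : X i₀ i₀ = 1) (hDX : D * X = 0) :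
    X = vecMulVec x (star x) := by
  have hcol : ∀ i j, X i j = X i₀ j * x i := fun i j => by
    have hu : D *ᵥ (fun k => X k j) = 0 := funext fun k => by
      simpa [mul_apply, mulVec, dotProduct] using congrFun (congrFun hDX k) j
    simpa using congrFun (hker _ hu) i
  ext i j
  rw [hcol, vecMulVec_apply, Pi.star_apply, ← hX.apply, hcol, hXi₀, one_mul, mul_comm]

theorem re_trace_conjTranspose_mul_self_mul_vecMulVec_lt [Fintype m] {D : Matrix m n 𝕜}
    {x : n → 𝕜} {i₀ : n} (hDx : D *ᵥ x = 0) (hker : ∀ u, D *ᵥ u = 0 → u = u i₀ • x)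
    {X : Matrix n n 𝕜} (hX : X.PosSemidef) (hXi₀ : X i₀ i₀ = 1) (hne : X ≠ vecMulVec x (star x)) :
    RCLike.re (Dᴴ * D * vecMulVec x (star x)).trace < RCLike.re (Dᴴ * D * X).trace := by
  have hzero : Dᴴ * D * vecMulVec x (star x) = 0 := by
    rw [Matrix.mul_assoc, mul_vecMulVec, hDx, zero_vecMulVec, Matrix.mul_zero]
  have hpos : 0 < (Dᴴ * D * X).trace :=
    (hX.trace_conjTranspose_mul_self_mul_nonneg D).lt_of_ne' fun h =>
      hne (hX.isHermitian.eq_vecMulVec_of_mul_eq_zero hker hXi₀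
        (hX.mul_eq_zero_of_trace_conjTranspose_mul_self_mul_eq_zero h))
  rw [hzero, trace_zero, map_zero]
  exact (RCLike.pos_iff.mp hpos).1

end Matrix

section Projection

variable {K : ℕ} (t : Fin (K - 1) → ℝ)

theorem Pmat_conjTranspose : (Pmat t)ᴴ = Pmat t := by
  rw [Pmat, conjTranspose_sub, conjTranspose_one]
  congr 1
  ext i j
  simp only [conjTranspose_apply, of_apply, RCLike.star_def, Complex.conj_ofReal, mul_comm (t j)]

theorem Pmat_mul_self : Pmat t * Pmat t = Pmat t := by
  set s := ∑ k, t k ^ 2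
  set Q : Matrix (Fin (K - 1)) (Fin (K - 1)) ℂ := of fun i j => ((s⁻¹ * (t i * t j) : ℝ) : ℂ)
  have hQ : Q * Q = Q := by
    ext i j
    simp only [Q, mul_apply, of_apply, ← Complex.ofReal_mul, ← Complex.ofReal_sum]
    congr 1
    calc ∑ k, s⁻¹ * (t i * t k) * (s⁻¹ * (t k * t j)) = s * s⁻¹ * s⁻¹ * (t i * t j) := by
          rw [mul_assoc, mul_assoc, Finset.sum_mul]
          exact Finset.sum_congr rfl fun k _ => by ring
      _ = s⁻¹ * (t i * t j) := by
          simpa only [inv_inv] using congrArg (· * (t i * t j)) (inv_mul_mul_self s⁻¹)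
  change (1 - Q) * (1 - Q) = 1 - Q
  simp only [sub_mul, mul_sub, one_mul, mul_one, hQ, sub_self, sub_zero]

theorem conjTranspose_mul_Pmat_mul {n : Type*} [Fintype n] (A : Matrix (Fin (K - 1)) n ℂ) :
    Aᴴ * Pmat t * A = (Pmat t * A)ᴴ * (Pmat t * A) := by
  rw [conjTranspose_mul, Pmat_conjTranspose, ← Matrix.mul_assoc,
    Matrix.mul_assoc Aᴴ (Pmat t) (Pmat t), Pmat_mul_self]

end Projection

section Augmented

variable {K M : ℕ} (H : Matrix (Fin (K - 1)) (Fin M) ℂ) (c : Fin (K - 1) → ℂ)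
  (t : Fin (K - 1) → ℝ)

noncomputable def Amat : Matrix (Fin (K - 1)) (Fin M ⊕ Fin 1) ℂ :=
  fromCols H (replicateCol (Fin 1) c)

theorem Amat_mulVec (u : Fin M ⊕ Fin 1 → ℂ) :
    Amat H c *ᵥ u = H *ᵥ (u ∘ Sum.inl) + u (Sum.inr 0) • c := by
  ext k
  simp [Amat, fromCols, replicateCol, mulVec, dotProduct, Fintype.sum_sum_type, mul_comm]

theorem Cmat_eq : Cmat H c t = (Amat H c)ᴴ * Pmat t * Amat H c -
    fromBlocks 0 0 0 (of fun _ _ => star c ⬝ᵥ (Pmat t *ᵥ c)) := by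
  rw [Amat, conjTranspose_fromCols_eq_fromRows_conjTranspose, conjTranspose_replicateCol,
    fromRows_mul, fromRows_mul_fromCols, Cmat, ← replicateCol_mulVec (Hᴴ * Pmat t),
    ← mulVec_mulVec, Matrix.mul_assoc (replicateRow (Fin 1) (star c)),
    Matrix.mul_assoc (replicateRow (Fin 1) (star c)), ← replicateCol_mulVec (Pmat t),
    replicateRow_mul_replicateCol, ← replicateRow_vecMul]
  ext (i | i) (j | j) <;> simp [replicateCol, replicateRow]

theorem trace_Cmat_mul {X : Matrix (Fin M ⊕ Fin 1) (Fin M ⊕ Fin 1) ℂ}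
    (hX : X (Sum.inr 0) (Sum.inr 0) = 1) :
    (Cmat H c t * X).trace =
      ((Pmat t * Amat H c)ᴴ * (Pmat t * Amat H c) * X).trace - star c ⬝ᵥ (Pmat t *ᵥ c) := by
  rw [Cmat_eq, conjTranspose_mul_Pmat_mul, Matrix.sub_mul, trace_sub]
  congr 1
  simp [trace, mul_apply, Fintype.sum_sum_type, fromBlocks, hX]

end Augmented

section Noiseless

variable {K M : ℕ} {H : Matrix (Fin (K - 1)) (Fin M) ℂ} {c : Fin (K - 1) → ℂ}
  {t : Fin (K - 1) → ℝ} {xbar : Fin M → ℂ}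

theorem Pmat_mulVec_eq_neg (hnoiseless : Pmat t *ᵥ (H *ᵥ xbar + c) = 0) :
    Pmat t *ᵥ c = -(Pmat t *ᵥ (H *ᵥ xbar)) :=
  eq_neg_of_add_eq_zero_right (by rwa [← mulVec_add])

theorem Pmat_mul_Amat_mulVec (hnoiseless : Pmat t *ᵥ (H *ᵥ xbar + c) = 0)
    (u : Fin M ⊕ Fin 1 → ℂ) :
    (Pmat t * Amat H c) *ᵥ u = Pmat t *ᵥ (H *ᵥ (u ∘ Sum.inl - u (Sum.inr 0) • xbar)) := by
  rw [← mulVec_mulVec, Amat_mulVec, mulVec_add, mulVec_smul, Pmat_mulVec_eq_neg hnoiseless,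
    mulVec_sub, mulVec_smul, mulVec_sub, mulVec_smul, smul_neg, sub_eq_add_neg]

theorem Pmat_mul_Amat_mulVec_elim (hnoiseless : Pmat t *ᵥ (H *ᵥ xbar + c) = 0) :
    (Pmat t * Amat H c) *ᵥ Sum.elim xbar (fun _ => 1) = 0 := by
  rw [Pmat_mul_Amat_mulVec hnoiseless]
  simp

theorem eq_smul_elim_of_Pmat_mul_Amat_mulVec_eq_zero (hfull : (Hᴴ * Pmat t * H).PosDef)
    (hnoiseless : Pmat t *ᵥ (H *ᵥ xbar + c) = 0) {u : Fin M ⊕ Fin 1 → ℂ}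
    (hu : (Pmat t * Amat H c) *ᵥ u = 0) : u = u (Sum.inr 0) • Sum.elim xbar (fun _ => 1) := by
  have hw : (Hᴴ * Pmat t * H) *ᵥ (u ∘ Sum.inl - u (Sum.inr 0) • xbar) = 0 := by
    rw [← mulVec_mulVec, ← mulVec_mulVec, ← Pmat_mul_Amat_mulVec hnoiseless, hu, mulVec_zero]
  have hw0 := (mulVec_injective_iff_isUnit.mpr hfull.isUnit) (hw.trans (mulVec_zero _).symm)
  ext (m | i)
  · simpa [sub_eq_zero, mul_comm] using congrFun hw0 m
  · simp [Subsingleton.elim i 0]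

theorem neg_inv_mulVec_eq (hfull : (Hᴴ * Pmat t * H).PosDef)
    (hnoiseless : Pmat t *ᵥ (H *ᵥ xbar + c) = 0) :
    -((Hᴴ * Pmat t * H)⁻¹ *ᵥ (Hᴴ *ᵥ (Pmat t *ᵥ c))) = xbar := by
  have hgram : Hᴴ *ᵥ (Pmat t *ᵥ (H *ᵥ xbar)) = (Hᴴ * Pmat t * H) *ᵥ xbar := by
    simp only [mulVec_mulVec, Matrix.mul_assoc]
  rw [Pmat_mulVec_eq_neg hnoiseless, mulVec_neg, hgram, mulVec_neg, mulVec_mulVec,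
    nonsing_inv_mul _ ((isUnit_iff_isUnit_det _).mp hfull.isUnit), one_mulVec, neg_neg]

end Noiseless

theorem sdp_exact_recovery_noiseless_general
    (M K : ℕ)
    (H : Matrix (Fin (K - 1)) (Fin M) ℂ) (c : Fin (K - 1) → ℂ)
    (t : Fin (K - 1) → ℝ)
    (hfull : (Hᴴ * Pmat t * H).PosDef)
    (xbar : Fin M → ℂ) (hxbar : ∀ m, ‖xbar m‖ = 1)
    (hnoiseless : Pmat t *ᵥ (H *ᵥ xbar + c) = 0) :
    let xstar : Fin M ⊕ Fin 1 → ℂ :=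
      Sum.elim (-((Hᴴ * Pmat t * H)⁻¹ *ᵥ (Hᴴ *ᵥ (Pmat t *ᵥ c)))) fun _ => 1
    let Xstar : Matrix (Fin M ⊕ Fin 1) (Fin M ⊕ Fin 1) ℂ :=
      Matrix.vecMulVec xstar (star xstar)
    (∀ m, xstar (Sum.inl m) = xbar m) ∧
    Xstar.PosSemidef ∧ Xstar.rank = 1 ∧ (∀ i, Xstar i i = 1) ∧
    ∀ X' : Matrix (Fin M ⊕ Fin 1) (Fin M ⊕ Fin 1) ℂ, X'.PosSemidef → (∀ i, X' i i = 1) →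
      X' ≠ Xstar → (Cmat H c t * Xstar).trace.re < (Cmat H c t * X').trace.re := by
  intro xstar Xstar
  simp only [xstar, Xstar, neg_inv_mulVec_eq hfull hnoiseless]
  set x : Fin M ⊕ Fin 1 → ℂ := Sum.elim xbar fun _ => 1
  have hdiag : ∀ i, vecMulVec x (star x) i i = 1 := by
    rintro (m | i) <;> simp [x, vecMulVec_apply, RCLike.mul_conj, hxbar]
  refine ⟨fun _ => rfl, posSemidef_vecMulVec_self_star x,
    rank_vecMulVec_self_star fun h => one_ne_zero (congrFun h (Sum.inr 0)), hdiag,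
    fun X' hX' hX'diag hne => ?_⟩
  rw [trace_Cmat_mul H c t (hdiag _), trace_Cmat_mul H c t (hX'diag _), Complex.sub_re,
    Complex.sub_re, sub_lt_sub_iff_right]
  exact re_trace_conjTranspose_mul_self_mul_vecMulVec_lt (Pmat_mul_Amat_mulVec_elim hnoiseless)
    (fun _ => eq_smul_elim_of_Pmat_mul_Amat_mulVec_eq_zero hfull hnoiseless) hX' (hX'diag _) hne

/-- Corollary 2 (exact recovery in the noiseless case `ΔH = 0`): if `H†PH` is positive
definite (i.e. `PH` has full column rank) and there is a unit-modulus vector `x̄` with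
`P(Hx̄ + c) = 0`, then `x* = (−(H†PH)⁻¹H†Pc, 1)` satisfies `x*_{1:M} = x̄`, and
`X* = x*(x*)†` is the unique rank-one minimizer of the SDP relaxation; in particular the
phases of `x*` exactly recover the true azimuth biases encoded in `x̄`. -/
theorem sdp_exact_recovery_noiseless
    (M K : ℕ) (hM : 1 ≤ M) (hK : 2 ≤ K)
    (H : Matrix (Fin (K - 1)) (Fin M) ℂ) (c : Fin (K - 1) → ℂ)
    (t : Fin (K - 1) → ℝ) (ht : t ≠ 0)
    (hfull : (Hᴴ * Pmat t * H).PosDef)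
    (xbar : Fin M → ℂ) (hxbar : ∀ m, ‖xbar m‖ = 1)
    (hnoiseless : Pmat t *ᵥ (H *ᵥ xbar + c) = 0) :
    let xstar : Fin M ⊕ Fin 1 → ℂ :=
      Sum.elim (-((Hᴴ * Pmat t * H)⁻¹ *ᵥ (Hᴴ *ᵥ (Pmat t *ᵥ c)))) fun _ => 1
    let Xstar : Matrix (Fin M ⊕ Fin 1) (Fin M ⊕ Fin 1) ℂ :=
      Matrix.vecMulVec xstar (star xstar)
    (∀ m, xstar (Sum.inl m) = xbar m) ∧
    Xstar.PosSemidef ∧ Xstar.rank = 1 ∧ (∀ i, Xstar i i = 1) ∧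
    ∀ X' : Matrix (Fin M ⊕ Fin 1) (Fin M ⊕ Fin 1) ℂ, X'.PosSemidef → (∀ i, X' i i = 1) →
      X' ≠ Xstar → (Cmat H c t * Xstar).trace.re < (Cmat H c t * X').trace.re :=
  sdp_exact_recovery_noiseless_general M K H c t hfull xbar hxbar hnoiseless
end

section
/- In the noiseless asynchronous multi-sensor model, the matrix H̃, the vector c, the unit-modulus vector x̄, and the time-difference vector t satisfy H̃·x̄ + c = v̄·t, i.e., for every k = 1,…,K−1, Σ_{m=1}^M H̃_{k,m}·x̄_m + c_k = T_k·v̄. Consequently, for the projection P = I_{K−1} − ‖t‖⁻²·t·tᵀ one has P(H̃x̄ + c) = 0. -/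
open Matrix

/-- In the noiseless asynchronous multi-sensor model, `H̃x̄ + c = v̄ t`, and consequently
`P(H̃x̄ + c) = 0` for the projection `P = I − ‖t‖⁻² t tᵀ`. -/
theorem noiseless_model_satisfies_linear_relation
    (M K : ℕ) (hM : 1 ≤ M) (hK : 2 ≤ K)
    (p : Fin M → ℂ) (s : Fin K → Fin M) (T : Fin (K - 1) → ℝ)
    (ξ : Fin K → ℂ) (vbar : ℂ) (ρ φ : Fin K → ℝ) (Δρbar Δφbar : Fin M → ℝ)
    (hmotion : ∀ k : Fin (K - 1), ξ (hiIdx k) = ξ (loIdx k) + (T k : ℂ) * vbar)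
    (hmeas : ∀ k : Fin K,
      ((ρ k + Δρbar (s k) : ℝ) : ℂ) * Complex.exp (Complex.I * ((φ k + Δφbar (s k) : ℝ) : ℂ))
        = ξ k - p (s k)) :
    let Htilde : Matrix (Fin (K - 1)) (Fin M) ℂ := Matrix.of fun k m =>
      (if m = s (hiIdx k) then
          ((ρ (hiIdx k) + Δρbar (s (hiIdx k)) : ℝ) : ℂ)
            * Complex.exp (Complex.I * ((φ (hiIdx k) : ℝ) : ℂ))
        else 0)
      - (if m = s (loIdx k) then
          ((ρ (loIdx k) + Δρbar (s (loIdx k)) : ℝ) : ℂ)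
            * Complex.exp (Complex.I * ((φ (loIdx k) : ℝ) : ℂ))
        else 0)
    let c : Fin (K - 1) → ℂ := fun k => p (s (hiIdx k)) - p (s (loIdx k))
    let xbar : Fin M → ℂ := fun m => Complex.exp (Complex.I * ((Δφbar m : ℝ) : ℂ))
    (∀ k : Fin (K - 1), (∑ m, Htilde k m * xbar m) + c k = (T k : ℂ) * vbar) ∧
    Pmat T *ᵥ (Htilde *ᵥ xbar + c) = 0 := by

  intro Htilde c xbar
  have e1 : ∀ j : Fin K,
      ((ρ j + Δρbar (s j) : ℝ) : ℂ) * Complex.exp (Complex.I * ((φ j : ℝ) : ℂ)) * xbar (s j)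
        = ξ j - p (s j) := by
    intro j
    rw [← hmeas j]
    simp only [xbar, mul_assoc, ← Complex.exp_add]
    push_cast
    ring_nf
  have key : ∀ k : Fin (K - 1),
      (∑ m, Htilde k m * xbar m) + c k = (T k : ℂ) * vbar := by
    intro k
    have hsum : (∑ m, Htilde k m * xbar m)
        = ((ρ (hiIdx k) + Δρbar (s (hiIdx k)) : ℝ) : ℂ)
            * Complex.exp (Complex.I * ((φ (hiIdx k) : ℝ) : ℂ)) * xbar (s (hiIdx k))
          - ((ρ (loIdx k) + Δρbar (s (loIdx k)) : ℝ) : ℂ)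
            * Complex.exp (Complex.I * ((φ (loIdx k) : ℝ) : ℂ)) * xbar (s (loIdx k)) := by
      simp [Htilde, sub_mul, ite_mul, Finset.sum_sub_distrib, Finset.sum_ite_eq']
    rw [hsum, e1, e1]
    simp only [c, hmotion k]
    ring
  refine ⟨key, ?_⟩
  have hvec : Htilde *ᵥ xbar + c = fun k => (T k : ℂ) * vbar := by
    funext k
    exact key k
  rw [hvec]
  funext i
  simp only [Pmat, mulVec, dotProduct, Matrix.sub_apply, Matrix.one_apply, Matrix.of_apply,
    Pi.zero_apply, sub_mul, ite_mul, one_mul, zero_mul, Finset.sum_sub_distrib,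
    Finset.sum_ite_eq, Finset.mem_univ, if_true]
  rw [sub_eq_zero]
  by_cases hS : (∑ k, T k ^ 2) = 0
  · have ht : ∀ j, T j = 0 := by
      intro j
      have := (Finset.sum_eq_zero_iff_of_nonneg (fun j _ => sq_nonneg (T j))).mp hS j
        (Finset.mem_univ j)
      nlinarith [this]
    simp [ht]
  · have step : ∀ j : Fin (K - 1),
        (((∑ k, T k ^ 2)⁻¹ * (T i * T j) : ℝ) : ℂ) * ((T j : ℂ) * vbar)
          = ((∑ k, T k ^ 2 : ℝ) : ℂ)⁻¹ * ((T j : ℂ) ^ 2) * ((T i : ℂ) * vbar) := by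
      intro j; push_cast; ring
    rw [Finset.sum_congr rfl (fun j _ => step j), ← Finset.sum_mul, ← Finset.mul_sum]
    have hsum2 : (∑ j, ((T j : ℂ)) ^ 2) = ((∑ k, T k ^ 2 : ℝ) : ℂ) := by
      push_cast; rfl
    rw [hsum2, inv_mul_cancel₀ (by exact_mod_cast hS), one_mul]
end

section
/- For every x ∈ ℂ^{M+1} with |x_{M+1}| = 1, writing u = (x₁,…,x_M) ∈ ℂ^M and w = x_{M+1}, one has x†Cx = ‖P(H·(w̄·u) + c)‖² − ‖Pc‖² (in particular x†Cx is real). Consequently, a vector x ∈ ℂ^{M+1} with |x_m| = 1 for all m = 1,…,M+1 minimizes x ↦ x†Cx over all such unit-modulus vectors if and only if the vector u' ∈ ℂ^M with u'_m = x_m/x_{M+1} minimizes u' ↦ ‖P(Hu' + c)‖² over all u' ∈ ℂ^M with |u'_m| = 1 for all m; i.e., the homogenized QCQP is equivalent to the original azimuth-bias QCQP. -/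
open Matrix
open scoped ComplexOrder

/-!
Expanding the block product gives `x†Cx = v†Pv − |w|² c†Pc` with `v = Hu + wc` for every
`x = (u, w)`, and `v†Pv = ‖Pv‖²` because `P` is an orthogonal projection. If `|w| = 1` then
`v = w (H(w̄u) + c)`, so the homogenized objective is the original one at `u / w`, up to the
constant `‖Pc‖²`; and `x ↦ u / w` maps the unit-modulus vectors of `ℂ^{M+1}` onto those of
`ℂ^M`, so it carries minimizers to minimizers and back.
-/

open ComplexConjugate

theorem isStarProjection_normalized_outerProduct {n : Type*} [Fintype n] {t : n → ℝ}
    (ht : t ≠ 0) :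
    IsStarProjection (of fun i j => (((∑ k, t k ^ 2)⁻¹ * (t i * t j) : ℝ) : ℂ)) := by
  have hs : ∑ k, t k ^ 2 ≠ 0 := by
    obtain ⟨k, hk⟩ := Function.ne_iff.mp ht
    have hk : t k ≠ 0 := hk
    exact (Finset.sum_pos' (fun i _ => sq_nonneg (t i)) ⟨k, Finset.mem_univ k, by positivity⟩).ne'
  constructor
  · ext i j
    simp only [mul_apply, of_apply, ← Complex.ofReal_mul, ← Complex.ofReal_sum]
    congr 1
    calc ∑ k, (∑ k, t k ^ 2)⁻¹ * (t i * t k) * ((∑ k, t k ^ 2)⁻¹ * (t k * t j))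
        = (∑ k, t k ^ 2)⁻¹ ^ 2 * (t i * t j) * ∑ k, t k ^ 2 := by
          rw [Finset.mul_sum]; exact Finset.sum_congr rfl fun k _ => by ring
      _ = (∑ k, t k ^ 2)⁻¹ * (t i * t j) := by field_simp
  · ext i j
    simp only [star_apply, of_apply, Complex.star_def, Complex.conj_ofReal, mul_comm (t j)]

theorem Pmat_isStarProjection {K : ℕ} {t : Fin (K - 1) → ℝ} (ht : t ≠ 0) :
    IsStarProjection (Pmat t) :=
  (isStarProjection_normalized_outerProduct ht).one_sub

theorem ofReal_sum_norm_sq_eq_star_dotProduct {n : Type*} [Fintype n] (v : n → ℂ) :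
    ((∑ k, ‖v k‖ ^ 2 : ℝ) : ℂ) = star v ⬝ᵥ v := by
  simp [dotProduct, Complex.conj_mul']

theorem IsStarProjection.ofReal_sum_norm_sq_mulVec {n : Type*} [Fintype n] {P : Matrix n n ℂ}
    (hP : IsStarProjection P) (v : n → ℂ) :
    ((∑ k, ‖(P *ᵥ v) k‖ ^ 2 : ℝ) : ℂ) = star v ⬝ᵥ (P *ᵥ v) := by
  rw [ofReal_sum_norm_sq_eq_star_dotProduct, star_mulVec, ← dotProduct_mulVec, mulVec_mulVec,
    ← star_eq_conjTranspose, hP.isSelfAdjoint.star_eq, hP.isIdempotentElem.eq]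

theorem isMinOn_iff_of_surjOn {α β γ : Type*} [AddCommGroup γ] [PartialOrder γ]
    [IsOrderedAddMonoid γ] {f : β → γ} {g : α → γ} {φ : α → β} {s : Set α} {t : Set β} {a : α}
    {k : γ} (hφ : Set.MapsTo φ s t) (hφ' : Set.SurjOn φ s t) (hg : ∀ x ∈ s, g x = f (φ x) - k)
    (ha : a ∈ s) : IsMinOn g s a ↔ IsMinOn f t (φ a) := by
  simp only [isMinOn_iff]
  constructor
  · intro hmin u hu
    obtain ⟨x, hx, rfl⟩ := hφ' hu
    simpa [hg a ha, hg x hx] using hmin x hx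
  · intro hmin x hx
    simpa [hg a ha, hg x hx] using hmin (φ x) (hφ hx)

def unitModulus (ι : Type*) : Set (ι → ℂ) := {x | ∀ i, ‖x i‖ = 1}

noncomputable def dehomogenize {ι : Type*} (x : ι ⊕ Fin 1 → ℂ) : ι → ℂ :=
  fun m => x (Sum.inl m) / x (Sum.inr 0)

theorem mapsTo_dehomogenize {ι : Type*} :
    Set.MapsTo dehomogenize (unitModulus (ι ⊕ Fin 1)) (unitModulus ι) := fun x hx m => by
  rw [dehomogenize, norm_div, hx, hx, div_one]

theorem surjOn_dehomogenize {ι : Type*} :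
    Set.SurjOn dehomogenize (unitModulus (ι ⊕ Fin 1)) (unitModulus ι) := fun u hu =>
  ⟨Sum.elim u 1, fun i => i.rec hu fun _ => norm_one, funext fun m => div_one (u m)⟩

section Homogenization

variable {M K : ℕ} (H : Matrix (Fin (K - 1)) (Fin M) ℂ) (c : Fin (K - 1) → ℂ)

theorem star_dotProduct_Cmat_mulVec (t : Fin (K - 1) → ℝ) (u : Fin M → ℂ) (w : ℂ) :
    star (Sum.elim u fun _ => w) ⬝ᵥ (Cmat H c t *ᵥ Sum.elim u fun _ => w)
      = star (H *ᵥ u + w • c) ⬝ᵥ (Pmat t *ᵥ (H *ᵥ u + w • c))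
        - star w * w * (star c ⬝ᵥ (Pmat t *ᵥ c)) := by
  set b := Hᴴ *ᵥ (Pmat t *ᵥ c)
  set r := star c ᵥ* (Pmat t * H)
  have hcol : (of fun i (_ : Fin 1) => b i) *ᵥ (fun _ => w) = w • b := by
    ext i; simp [mulVec, dotProduct, mul_comm]
  have hrow : (of fun (_ : Fin 1) j => r j) *ᵥ u = fun _ => r ⬝ᵥ u := rfl
  have hlast : (star fun _ : Fin 1 => w) ⬝ᵥ (fun _ => r ⬝ᵥ u) = star w * (r ⬝ᵥ u) := by
    simp [dotProduct]
  rw [Cmat, fromBlocks_mulVec, Sum.elim_comp_inl, Sum.elim_comp_inr, hcol, hrow, zero_mulVec,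
    add_zero, Function.star_sumElim, sumElim_dotProduct_sumElim, hlast]
  simp only [b, r, mulVec_add, mulVec_smul, mulVec_mulVec, star_add, star_smul, star_mulVec,
    add_vecMul, smul_vecMul, vecMul_vecMul, add_dotProduct, dotProduct_add, smul_dotProduct,
    dotProduct_smul, dotProduct_mulVec, smul_eq_mul, Matrix.mul_assoc]
  ring

theorem star_dotProduct_Cmat_mulVec_of_norm_eq_one {t : Fin (K - 1) → ℝ} (ht : t ≠ 0)
    (x : Fin M ⊕ Fin 1 → ℂ) (hx : ‖x (Sum.inr 0)‖ = 1) :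
    star x ⬝ᵥ (Cmat H c t *ᵥ x)
      = ((∑ k, ‖(Pmat t *ᵥ (H *ᵥ (fun m => conj (x (Sum.inr 0)) * x (Sum.inl m)) + c)) k‖ ^ 2
          - ∑ k, ‖(Pmat t *ᵥ c) k‖ ^ 2 : ℝ) : ℂ) := by
  set w := x (Sum.inr 0)
  set u : Fin M → ℂ := fun m => x (Sum.inl m)
  have hxuw : x = Sum.elim u fun _ => w := by
    ext (m | j)
    · rfl
    · rw [Subsingleton.elim j 0]; rfl
  have hw : star w * w = 1 := by
    rw [Complex.star_def, Complex.conj_mul', hx]; norm_num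
  have hv : H *ᵥ u + w • c = w • (H *ᵥ (fun m => conj w * u m) + c) := by
    rw [smul_add, show (fun m => conj w * u m) = star w • u from rfl, mulVec_smul, smul_smul,
      mul_comm, hw, one_smul]
  have hform := star_dotProduct_Cmat_mulVec H c t u w
  rw [← hxuw] at hform
  rw [hform, hv, star_smul, mulVec_smul, smul_dotProduct, dotProduct_smul, smul_smul, smul_eq_mul,
    hw, one_mul, one_mul, Complex.ofReal_sub,
    (Pmat_isStarProjection ht).ofReal_sum_norm_sq_mulVec,
    (Pmat_isStarProjection ht).ofReal_sum_norm_sq_mulVec]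

theorem re_star_dotProduct_Cmat_mulVec_of_norm_eq_one {t : Fin (K - 1) → ℝ} (ht : t ≠ 0)
    {x : Fin M ⊕ Fin 1 → ℂ} (hx : ‖x (Sum.inr 0)‖ = 1) :
    (star x ⬝ᵥ (Cmat H c t *ᵥ x)).re
      = ∑ k, ‖(Pmat t *ᵥ (H *ᵥ dehomogenize x + c)) k‖ ^ 2 - ∑ k, ‖(Pmat t *ᵥ c) k‖ ^ 2 := by
  have hconj : (fun m => conj (x (Sum.inr 0)) * x (Sum.inl m)) = dehomogenize x := by
    ext m
    rw [dehomogenize, ← Complex.inv_eq_conj hx, div_eq_mul_inv, mul_comm]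
  rw [star_dotProduct_Cmat_mulVec_of_norm_eq_one H c ht x hx, hconj, Complex.ofReal_re]

end Homogenization

theorem homogenized_qcqp_equivalence_general
    (M K : ℕ)
    (H : Matrix (Fin (K - 1)) (Fin M) ℂ) (c : Fin (K - 1) → ℂ)
    (t : Fin (K - 1) → ℝ) (ht : t ≠ 0) :
    (∀ x : Fin M ⊕ Fin 1 → ℂ, norm (x (Sum.inr 0)) = 1 →
      star x ⬝ᵥ (Cmat H c t *ᵥ x)
        = (((∑ k, norm ((Pmat t *ᵥ
              (H *ᵥ (fun m => (starRingEnd ℂ) (x (Sum.inr 0)) * x (Sum.inl m)) + c)) k) ^ 2)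
            - ∑ k, norm ((Pmat t *ᵥ c) k) ^ 2 : ℝ) : ℂ)) ∧
    (∀ x : Fin M ⊕ Fin 1 → ℂ, (∀ i, norm (x i) = 1) →
      ((∀ x' : Fin M ⊕ Fin 1 → ℂ, (∀ i, norm (x' i) = 1) →
          (star x ⬝ᵥ (Cmat H c t *ᵥ x)).re ≤ (star x' ⬝ᵥ (Cmat H c t *ᵥ x')).re) ↔
        (∀ u' : Fin M → ℂ, (∀ m, norm (u' m) = 1) →
          (∑ k, norm ((Pmat t *ᵥ
              (H *ᵥ (fun m => x (Sum.inl m) / x (Sum.inr 0)) + c)) k) ^ 2)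
            ≤ ∑ k, norm ((Pmat t *ᵥ (H *ᵥ u' + c)) k) ^ 2))) := by
  refine ⟨star_dotProduct_Cmat_mulVec_of_norm_eq_one H c ht, fun x hx => ?_⟩
  have hmin := isMinOn_iff_of_surjOn (g := fun x => (star x ⬝ᵥ (Cmat H c t *ᵥ x)).re)
    (f := fun u => ∑ k, ‖(Pmat t *ᵥ (H *ᵥ u + c)) k‖ ^ 2) mapsTo_dehomogenize
    surjOn_dehomogenize (fun x hx => re_star_dotProduct_Cmat_mulVec_of_norm_eq_one H c ht (hx _))
    (show x ∈ unitModulus _ from hx)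
  exact isMinOn_iff.symm.trans (hmin.trans isMinOn_iff)

/-- Equivalence of the homogenized QCQP with the original azimuth-bias QCQP: for any `x` with
`|x_{M+1}| = 1`, `x†Cx = ‖P(H(w̄ u) + c)‖² − ‖Pc‖²` where `u = x_{1:M}` and `w = x_{M+1}`;
consequently, `x` (unit-modulus in all coordinates) minimizes `x ↦ x†Cx` over unit-modulus
vectors iff `u' = x_{1:M}/x_{M+1}` minimizes `u' ↦ ‖P(Hu' + c)‖²` over unit-modulus vectors. -/
theorem homogenized_qcqp_equivalence
    (M K : ℕ) (hM : 1 ≤ M) (hK : 2 ≤ K)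
    (H : Matrix (Fin (K - 1)) (Fin M) ℂ) (c : Fin (K - 1) → ℂ)
    (t : Fin (K - 1) → ℝ) (ht : t ≠ 0) :
    (∀ x : Fin M ⊕ Fin 1 → ℂ, norm (x (Sum.inr 0)) = 1 →
      star x ⬝ᵥ (Cmat H c t *ᵥ x)
        = (((∑ k, norm ((Pmat t *ᵥ
              (H *ᵥ (fun m => (starRingEnd ℂ) (x (Sum.inr 0)) * x (Sum.inl m)) + c)) k) ^ 2)
            - ∑ k, norm ((Pmat t *ᵥ c) k) ^ 2 : ℝ) : ℂ)) ∧
    (∀ x : Fin M ⊕ Fin 1 → ℂ, (∀ i, norm (x i) = 1) →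
      ((∀ x' : Fin M ⊕ Fin 1 → ℂ, (∀ i, norm (x' i) = 1) →
          (star x ⬝ᵥ (Cmat H c t *ᵥ x)).re ≤ (star x' ⬝ᵥ (Cmat H c t *ᵥ x')).re) ↔
        (∀ u' : Fin M → ℂ, (∀ m, norm (u' m) = 1) →
          (∑ k, norm ((Pmat t *ᵥ
              (H *ᵥ (fun m => x (Sum.inl m) / x (Sum.inr 0)) + c)) k) ^ 2)
            ≤ ∑ k, norm ((Pmat t *ᵥ (H *ᵥ u' + c)) k) ^ 2))) :=
  homogenized_qcqp_equivalence_general M K H c t ht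
end

section
/- Let H̃ ∈ ℂ^{(K−1)×M} be such that H̃†PH̃ is positive definite, and let ψ̃ ∈ ℝ^M be such that P(H̃x̄ + c) = 0 where x̄_m = e^{iψ̃_m}. Then there exist an open neighborhood 𝓗 ⊆ ℂ^{(K−1)×M} of H̃ and continuously differentiable (over ℝ) functions d_ψ : ℂ^{(K−1)×M} → ℝ^M and d_y : ℂ^{(K−1)×M} → ℝ^M with d_ψ(H̃) = ψ̃ and d_y(H̃) = 0, such that for every H ∈ 𝓗, letting ψ = d_ψ(H), y = d_y(H), and W = Diag(e^{iψ₁},…,e^{iψ_M}), the complex vector equation (W†H†PHW + Diag(y))·𝟙 + W†H†Pc = 0 holds (𝟙 ∈ ℝ^M the all-one vector). Moreover there is a neighborhood U of (ψ̃, 0) in ℝ^M × ℝ^M such that for every H ∈ 𝓗, (d_ψ(H), d_y(H)) is the unique pair (ψ, y) ∈ U satisfying this equation. -/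
open Matrix
open scoped ComplexOrder

attribute [local instance] Matrix.normedAddCommGroup Matrix.normedSpace

/-- The stationarity equation `(W†H†PHW + Diag(y))𝟙 + W†H†Pc = 0`, where
`W = Diag(e^{iψ₁},…,e^{iψ_M})`. -/
def regEq {K M : ℕ} (t : Fin (K - 1) → ℝ) (c : Fin (K - 1) → ℂ)
    (H : Matrix (Fin (K - 1)) (Fin M) ℂ) (ψ y : Fin M → ℝ) : Prop :=
  let W : Matrix (Fin M) (Fin M) ℂ :=
    Matrix.diagonal fun m => Complex.exp (Complex.I * ((ψ m : ℝ) : ℂ))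
  (Wᴴ * Hᴴ * Pmat t * H * W + Matrix.diagonal fun m => ((y m : ℝ) : ℂ)) *ᵥ (fun _ => 1)
    + Wᴴ *ᵥ (Hᴴ *ᵥ (Pmat t *ᵥ c)) = 0

/-!
Write the stationarity equation as `F(H, ψ, y) = 0` for the smooth map
`F(H, ψ, y) = conj(x) ⊙ H†P(Hx + c) + y`, `x = e^{iψ}`, with values in `ℂ^M`, a real space of the
same dimension `2M` as the unknowns `(ψ, y)`. The implicit function theorem applies at
`(H̃, ψ̃, 0)` once the partial derivative of `F` in `(ψ, y)` is injective. Because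
`P(H̃x̃ + c) = 0`, that derivative is `(δψ, δy) ↦ conj(x̃) ⊙ Az + δy` with `A = H̃†PH̃` and
`z = iδψ ⊙ x̃`. If it vanishes, every `conj(x̃_m)(Az)_m` is real, so
`z†Az = ∑ -iδψ_m conj(x̃_m)(Az)_m` is purely imaginary; positive definiteness of `A` then forces
`z = 0`, hence `δψ = 0` and `δy = 0`.
-/

open Filter Topology
open scoped ContDiff

@[fun_prop]
theorem ContDiff.star {E F : Type*} [NormedAddCommGroup E] [NormedSpace ℝ E]
    [NormedAddCommGroup F] [StarAddMonoid F] [NormedSpace ℝ F] [StarModule ℝ F] [ContinuousStar F]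
    {n : ℕ∞ω} {f : E → F} (hf : ContDiff ℝ n f) : ContDiff ℝ n fun x => star (f x) :=
  (starL' ℝ : F ≃L[ℝ] F).contDiff.comp hf

@[fun_prop]
theorem ContDiff.ofReal {E : Type*} [NormedAddCommGroup E] [NormedSpace ℝ E]
    {n : ℕ∞ω} {f : E → ℝ} (hf : ContDiff ℝ n f) : ContDiff ℝ n fun x => (f x : ℂ) :=
  Complex.ofRealCLM.contDiff.comp hf

theorem HasDerivAt.matrix_mulVec {m n : Type*} [Fintype n] (A : Matrix m n ℂ)
    {f : ℝ → n → ℂ} {f' : n → ℂ} {s : ℝ} (hf : HasDerivAt f f' s) :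
    HasDerivAt (fun s => A *ᵥ f s) (A *ᵥ f') s := by
  refine hasDerivAt_pi.2 fun i => ?_
  simp only [mulVec, dotProduct]
  exact HasDerivAt.fun_sum fun j _ => (hasDerivAt_pi.1 hf j).const_mul (A i j)

theorem ContinuousLinearMap.isInvertible_of_injective_of_finrank_eq {𝕜 E F : Type*}
    [RCLike 𝕜] [NormedAddCommGroup E] [NormedSpace 𝕜 E] [FiniteDimensional 𝕜 E]
    [NormedAddCommGroup F] [NormedSpace 𝕜 F] [FiniteDimensional 𝕜 F] {f : E →L[𝕜] F}
    (hf : Function.Injective f) (hrank : Module.finrank 𝕜 E = Module.finrank 𝕜 F) :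
    f.IsInvertible :=
  ⟨(LinearEquiv.ofBijective f.toLinearMap
      ⟨hf, (LinearMap.injective_iff_surjective_of_finrank_eq_finrank hrank).mp hf⟩)
      |>.toContinuousLinearEquiv, rfl⟩

theorem ContDiffAt.exists_isOpen_implicitFunction {𝕜 E₁ E₂ F : Type*} [RCLike 𝕜]
    [NormedAddCommGroup E₁] [NormedSpace 𝕜 E₁] [CompleteSpace E₁]
    [NormedAddCommGroup E₂] [NormedSpace 𝕜 E₂] [CompleteSpace E₂]
    [NormedAddCommGroup F] [NormedSpace 𝕜 F] [CompleteSpace F]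
    {f : E₁ × E₂ → F} {u : E₁ × E₂}
    {n : ℕ∞ω} (hf : ContDiffAt 𝕜 n f u) (hn₀ : n ≠ 0) (hn : n ≠ ∞)
    (hinv : (fderiv 𝕜 f u ∘L .inr 𝕜 E₁ E₂).IsInvertible) :
    ∃ V : Set E₁, IsOpen V ∧ u.1 ∈ V ∧ ∃ g : E₁ → E₂, ContDiffOn 𝕜 n g V ∧ g u.1 = u.2 ∧
      (∀ x ∈ V, f (x, g x) = f u) ∧
      ∃ U ∈ 𝓝 u.2, ∀ x ∈ V, ∀ z ∈ U, f (x, z) = f u → z = g x := by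
  set g := hf.implicitFunction hn₀ hinv
  obtain ⟨A, hA, U, hU, hAU⟩ := mem_nhds_prod_iff.mp
    (hf.eventually_apply_eq_iff_implicitFunction hn₀ hinv)
  have hgood : ∀ᶠ x in 𝓝 u.1, x ∈ A ∧ f (x, g x) = f u ∧ ContDiffAt 𝕜 n g x :=
    Filter.inter_mem hA <| (hf.eventually_apply_implicitFunction hn₀ hinv).and
      ((hf.contDiffAt_implicitFunction hn₀ hinv).eventually hn)
  refine ⟨interior {x | x ∈ A ∧ f (x, g x) = f u ∧ ContDiffAt 𝕜 n g x}, isOpen_interior,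
    mem_interior_iff_mem_nhds.mpr hgood, g,
    fun x hx => (interior_subset hx).2.2.contDiffWithinAt,
    hf.implicitFunction_apply_self hn₀ hinv, fun x hx => (interior_subset hx).2.1, U, hU, ?_⟩
  exact fun x hx z hz hfz => ((hAU ⟨(interior_subset hx).1, hz⟩).mp hfz).symm

theorem Matrix.PosDef.eq_zero_of_forall_im_star_mul_mulVec_eq_zero {n : Type*} [Fintype n]
    {A : Matrix n n ℂ} (hA : A.PosDef) (x : n → ℂ) (δ : n → ℝ)
    (h : ∀ m, (star (x m) * (A *ᵥ fun k => Complex.I * δ k * x k) m).im = 0) :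
    (fun k => Complex.I * δ k * x k) = 0 := by
  set z : n → ℂ := fun k => Complex.I * δ k * x k
  by_contra hz
  have hre : (star z ⬝ᵥ (A *ᵥ z)).re = 0 := by
    have hterm : ∀ m, (star (z m) * (A *ᵥ z) m).re = δ m * (star (x m) * (A *ᵥ z) m).im := by
      intro m
      simp only [z, star_mul', Complex.star_def, Complex.conj_I, Complex.conj_ofReal,
        Complex.mul_re, Complex.mul_im, Complex.neg_re, Complex.neg_im, Complex.I_re, Complex.I_im,
        Complex.ofReal_re, Complex.ofReal_im]
      ring
    simp only [dotProduct, Complex.re_sum, Pi.star_apply, hterm, h, mul_zero,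
      Finset.sum_const_zero]
  exact (hA.re_dotProduct_pos hz).ne' hre

section Stationarity

variable {ι κ : Type*}

noncomputable def phases (ψ : ι → ℝ) : ι → ℂ := fun m => Complex.exp (Complex.I * ψ m)

noncomputable def stationarityMap [Fintype ι] [Fintype κ] (P : Matrix κ κ ℂ) (c : κ → ℂ)
    (p : Matrix κ ι ℂ × ((ι → ℝ) × (ι → ℝ))) : ι → ℂ :=
  star (phases p.2.1) * (p.1ᴴ *ᵥ (P *ᵥ (p.1 *ᵥ phases p.2.1 + c))) + fun m => (p.2.2 m : ℂ)

theorem regEq_iff {K M : ℕ} (t : Fin (K - 1) → ℝ) (c : Fin (K - 1) → ℂ)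
    (H : Matrix (Fin (K - 1)) (Fin M) ℂ) (ψ y : Fin M → ℝ) :
    regEq t c H ψ y ↔ stationarityMap (Pmat t) c (H, (ψ, y)) = 0 := by
  have hW : diagonal (phases ψ) *ᵥ (fun _ => 1) = phases ψ := by ext; simp [mulVec_diagonal]
  have hexpand : ((diagonal (phases ψ))ᴴ * Hᴴ * Pmat t * H * diagonal (phases ψ)
        + diagonal fun m => (y m : ℂ)) *ᵥ (fun _ => 1)
      + (diagonal (phases ψ))ᴴ *ᵥ (Hᴴ *ᵥ (Pmat t *ᵥ c))
      = stationarityMap (Pmat t) c (H, (ψ, y)) := by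
    ext m
    simp only [stationarityMap, diagonal_conjTranspose, add_mulVec, ← mulVec_mulVec, hW,
      mulVec_add, mulVec_diagonal, Pi.add_apply, Pi.mul_apply, Pi.star_apply, RCLike.star_def,
      mul_one]
    ring
  exact Iff.of_eq (congrArg (· = 0) hexpand)

theorem hasDerivAt_phases_line (ψ δ : ι → ℝ) :
    HasDerivAt (fun s : ℝ => phases (ψ + s • δ)) (fun k => Complex.I * δ k * phases ψ k) 0 := by
  refine hasDerivAt_pi.2 fun k => ?_
  have h : HasDerivAt (fun s : ℝ => Complex.I * ((ψ k + s * δ k : ℝ) : ℂ)) (Complex.I * δ k) 0 := by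
    simpa using
      (((hasDerivAt_id (0 : ℝ)).mul_const (δ k)).const_add (ψ k)).ofReal_comp.const_mul Complex.I
  simpa [phases, mul_comm] using h.cexp

variable [Fintype ι] [Fintype κ]

@[fun_prop]
theorem contDiff_phases {n : ℕ∞ω} : ContDiff ℝ n (phases : (ι → ℝ) → ι → ℂ) := by
  unfold phases
  fun_prop

theorem contDiff_stationarityMap {n : ℕ∞ω} (P : Matrix κ κ ℂ) (c : κ → ℂ) :
    ContDiff ℝ n (stationarityMap (ι := ι) P c) := by
  refine contDiff_pi.2 fun m => ?_
  simp only [stationarityMap, Pi.add_apply, Pi.mul_apply, Pi.star_apply, mulVec, dotProduct,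
    conjTranspose_apply]
  fun_prop

theorem hasDerivAt_stationarityMap_line (P : Matrix κ κ ℂ) (c : κ → ℂ) (H : Matrix κ ι ℂ)
    {ψ : ι → ℝ} (hψ : P *ᵥ (H *ᵥ phases ψ + c) = 0) (y δψ δy : ι → ℝ) :
    HasDerivAt (fun s : ℝ => stationarityMap P c (H, (ψ + s • δψ, y + s • δy)))
      (star (phases ψ) * ((Hᴴ * P * H) *ᵥ fun k => Complex.I * δψ k * phases ψ k)
        + fun m => (δy m : ℂ)) 0 := by
  have hx := hasDerivAt_phases_line ψ δψ
  have hw := (((hx.matrix_mulVec H).add_const c).matrix_mulVec P).matrix_mulVec Hᴴ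
  have hy : HasDerivAt (fun s : ℝ => fun m => ((y + s • δy) m : ℂ)) (fun m => (δy m : ℂ)) 0 := by
    refine hasDerivAt_pi.2 fun m => ?_
    simpa using ((hasDerivAt_id (0 : ℝ)).mul_const (δy m)).const_add (y m) |>.ofReal_comp
  refine ((hx.star.mul hw).add hy).congr_deriv ?_
  simp [hψ, mulVec_mulVec, Matrix.mul_assoc]

theorem isInvertible_fderiv_stationarityMap_inr (P : Matrix κ κ ℂ) (c : κ → ℂ) {H : Matrix κ ι ℂ}
    (hpd : (Hᴴ * P * H).PosDef) {ψ : ι → ℝ} (hψ : P *ᵥ (H *ᵥ phases ψ + c) = 0) (y : ι → ℝ) :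
    (fderiv ℝ (stationarityMap P c) (H, (ψ, y)) ∘L .inr ℝ _ _).IsInvertible := by
  refine ContinuousLinearMap.isInvertible_of_injective_of_finrank_eq ?_ ?_
  · rw [injective_iff_map_eq_zero]
    rintro ⟨δψ, δy⟩ hv
    have hline : HasDerivAt (fun s : ℝ => stationarityMap P c (H, (ψ + s • δψ, y + s • δy)))
        (fderiv ℝ (stationarityMap P c) (H, (ψ, y)) (0, (δψ, δy))) 0 := by
      have hf := ((contDiff_stationarityMap (ι := ι) (n := 1) P c).differentiable one_ne_zero
        (H, (ψ, y))).hasFDerivAt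
      have hpath : HasDerivAt (fun s : ℝ => (H, (ψ + s • δψ, y + s • δy)))
          ((0 : Matrix κ ι ℂ), (δψ, δy)) 0 :=
        (hasDerivAt_const _ _).prodMk <| HasDerivAt.prodMk
          (by simpa using ((hasDerivAt_id (0 : ℝ)).smul_const δψ).const_add ψ)
          (by simpa using ((hasDerivAt_id (0 : ℝ)).smul_const δy).const_add y)
      exact hf.comp_hasDerivAt_of_eq (0 : ℝ) hpath (by simp)
    have hzero := hline.unique (hasDerivAt_stationarityMap_line P c H hψ y δψ δy)
    simp only [ContinuousLinearMap.comp_apply, ContinuousLinearMap.inr_apply] at hv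
    rw [hv] at hzero
    have hz := hpd.eq_zero_of_forall_im_star_mul_mulVec_eq_zero (phases ψ) δψ fun m => by
      have hm := congrFun hzero m
      simp only [Pi.zero_apply, Pi.add_apply, Pi.mul_apply, Pi.star_apply] at hm
      rw [eq_neg_of_add_eq_zero_left hm.symm]
      simp
    have hδψ : δψ = 0 := funext fun k => by
      simpa [phases, Complex.exp_ne_zero] using congrFun hz k
    have hδy : δy = 0 := funext fun m => by
      simpa [hz, eq_comm] using congrFun hzero m
    rw [hδψ, hδy, Prod.mk_zero_zero]
  · simp [Module.finrank_pi_fintype, Complex.finrank_real_complex, mul_two]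

end Stationarity

theorem implicit_function_for_stationarity_equation_general
    (M K : ℕ)
    (c : Fin (K - 1) → ℂ) (t : Fin (K - 1) → ℝ)
    (Htilde : Matrix (Fin (K - 1)) (Fin M) ℂ)
    (hpd : (Htildeᴴ * Pmat t * Htilde).PosDef)
    (ψt : Fin M → ℝ)
    (hnl : Pmat t *ᵥ (Htilde *ᵥ (fun m => Complex.exp (Complex.I * ((ψt m : ℝ) : ℂ))) + c)
      = 0) :
    ∃ 𝓗 : Set (Matrix (Fin (K - 1)) (Fin M) ℂ), IsOpen 𝓗 ∧ Htilde ∈ 𝓗 ∧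
    ∃ dψ dy : Matrix (Fin (K - 1)) (Fin M) ℂ → (Fin M → ℝ),
      ContDiffOn ℝ 1 dψ 𝓗 ∧ ContDiffOn ℝ 1 dy 𝓗 ∧
      dψ Htilde = ψt ∧ dy Htilde = 0 ∧
      (∀ H ∈ 𝓗, regEq t c H (dψ H) (dy H)) ∧
      ∃ U : Set ((Fin M → ℝ) × (Fin M → ℝ)), U ∈ nhds (ψt, (0 : Fin M → ℝ)) ∧
        ∀ H ∈ 𝓗, ∀ ψ y : Fin M → ℝ, (ψ, y) ∈ U → regEq t c H ψ y →
          ψ = dψ H ∧ y = dy H := by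
  have hnl' : Pmat t *ᵥ (Htilde *ᵥ phases ψt + c) = 0 := hnl
  have hzero : stationarityMap (Pmat t) c (Htilde, (ψt, 0)) = 0 := by
    ext m
    simp [stationarityMap, hnl', -mulVec_mulVec]
  obtain ⟨𝓗, h𝓗, hH, g, hg, hg₀, hsol, U, hU, huniq⟩ :=
    ((contDiff_stationarityMap (n := 1) (Pmat t) c).contDiffAt
      (x := (Htilde, (ψt, 0)))).exists_isOpen_implicitFunction one_ne_zero (by simp)
      (isInvertible_fderiv_stationarityMap_inr (Pmat t) c hpd hnl' 0)
  refine ⟨𝓗, h𝓗, hH, fun H => (g H).1, fun H => (g H).2, contDiff_fst.comp_contDiffOn hg,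
    contDiff_snd.comp_contDiffOn hg, congrArg Prod.fst hg₀, congrArg Prod.snd hg₀,
    fun H hH => ?_, U, hU, fun H hH ψ y hψy hreg => ?_⟩
  · rw [regEq_iff, ← hzero]
    exact hsol H hH
  · rw [regEq_iff, ← hzero] at hreg
    exact Prod.ext_iff.mp (huniq H hH (ψ, y) hψy hreg)

/-- Claim 1 (implicit function theorem for the stationarity system): if `H̃†PH̃` is positive
definite and `ψ̃` solves the noiseless equation `P(H̃x̄ + c) = 0` with `x̄_m = e^{iψ̃_m}`, then
there are an open neighborhood `𝓗` of `H̃` and continuously differentiable functions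
`d_ψ, d_y` with `d_ψ(H̃) = ψ̃`, `d_y(H̃) = 0` solving the stationarity equation for every
`H ∈ 𝓗`, uniquely so in a fixed neighborhood `U` of `(ψ̃, 0)`. -/
theorem implicit_function_for_stationarity_equation
    (M K : ℕ) (hM : 1 ≤ M) (hK : 2 ≤ K)
    (c : Fin (K - 1) → ℂ) (t : Fin (K - 1) → ℝ) (ht : t ≠ 0)
    (Htilde : Matrix (Fin (K - 1)) (Fin M) ℂ)
    (hpd : (Htildeᴴ * Pmat t * Htilde).PosDef)
    (ψt : Fin M → ℝ)
    (hnl : Pmat t *ᵥ (Htilde *ᵥ (fun m => Complex.exp (Complex.I * ((ψt m : ℝ) : ℂ))) + c)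
      = 0) :
    ∃ 𝓗 : Set (Matrix (Fin (K - 1)) (Fin M) ℂ), IsOpen 𝓗 ∧ Htilde ∈ 𝓗 ∧
    ∃ dψ dy : Matrix (Fin (K - 1)) (Fin M) ℂ → (Fin M → ℝ),
      ContDiffOn ℝ 1 dψ 𝓗 ∧ ContDiffOn ℝ 1 dy 𝓗 ∧
      dψ Htilde = ψt ∧ dy Htilde = 0 ∧
      (∀ H ∈ 𝓗, regEq t c H (dψ H) (dy H)) ∧
      ∃ U : Set ((Fin M → ℝ) × (Fin M → ℝ)), U ∈ nhds (ψt, (0 : Fin M → ℝ)) ∧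
        ∀ H ∈ 𝓗, ∀ ψ y : Fin M → ℝ, (ψ, y) ∈ U → regEq t c H ψ y →
          ψ = dψ H ∧ y = dy H :=
  implicit_function_for_stationarity_equation_general M K c t Htilde hpd ψt hnl
end
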